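/- arXiv:2410.21417 — 10 statements merged into one kernel-verified Lean document; each statement's English description precedes it below -/
import Mathlib

section
/- Let H be a finite-dimensional complex inner product space, S ⊆ H a set of unit vectors, V = span(S), and P the orthogonal projection of H onto V. Suppose Q : H → H is a linear operator satisfying 0 ≤ ⟪x, Q x⟫ and ⟪x, Q x⟫ ≤ ‖x‖² for all x ∈ H (with ⟪x, Q x⟫ real for all x, i.e. Q is a positive contraction), and ⟪φ, Q φ⟫ = 1 for every φ ∈ S. Then Q x = x for every x ∈ V, and ⟪ψ, P ψ⟫ ≤ ⟪ψ, Q ψ⟫ for every ψ ∈ H. -/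
open scoped InnerProductSpace ComplexOrder

/-! Both `Q` and `1 - Q` are positive operators. Since `⟪φ, (1 - Q) φ⟫ = 0` for `φ ∈ S`, the
Cauchy–Schwarz inequality for the positive form `(x, y) ↦ ⟪(1 - Q) x, y⟫` forces `(1 - Q) φ = 0`,
so `Q` fixes `span S`. Writing `ψ = P ψ + w` with `w ⊥ span S`, symmetry of `Q` then gives
`⟪ψ, Q ψ⟫ = ⟪ψ, P ψ⟫ + ⟪w, Q w⟫ ≥ ⟪ψ, P ψ⟫`. -/

namespace LinearMap

section RCLike

variable {𝕜 E : Type*} [RCLike 𝕜] [NormedAddCommGroup E] [InnerProductSpace 𝕜 E]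

theorem IsPositive.apply_eq_zero_of_inner_eq_zero {T : E →ₗ[𝕜] E} (hT : T.IsPositive)
    {x : E} (hx : ⟪T x, x⟫_𝕜 = 0) : T x = 0 := by
  -- `t ↦ re ⟪T (x - t • T x), x - t • T x⟫` is a nonnegative quadratic, so its discriminant
  -- `4 ‖T x‖⁴` is nonpositive.
  have hquad : ∀ t : ℝ,
      0 ≤ RCLike.re ⟪T (T x), T x⟫_𝕜 * (t * t) + -2 * ‖T x‖ ^ 2 * t + 0 := by
    intro t
    have h := hT.re_inner_nonneg_left (x - (t : 𝕜) • T x)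
    rw [map_sub, map_smul, inner_sub_left, inner_sub_right, inner_sub_right, inner_smul_left,
      inner_smul_left, inner_smul_right, inner_smul_right, hT.isSymmetric (T x) x] at h
    simp only [RCLike.conj_ofReal, map_sub, RCLike.re_ofReal_mul, hx, map_zero,
      inner_self_eq_norm_sq] at h
    linarith
  have hdisc := discrim_le_zero hquad
  rw [discrim] at hdisc
  simpa using hdisc

theorem IsPositive.starProjection_le {Q : E →ₗ[𝕜] E} (hQ : Q.IsPositive) (K : Submodule 𝕜 E)
    [K.HasOrthogonalProjection] (hK : ∀ x ∈ K, Q x = x) : (K.starProjection : E →ₗ[𝕜] E) ≤ Q := by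
  refine ⟨hQ.isSymmetric.sub K.starProjection_isSymmetric, fun x => ?_⟩
  set w := x - K.starProjection x
  have hPx : K.starProjection x ∈ K := K.starProjection_apply_mem x
  have hdiff : (Q - K.starProjection) x = Q w := by
    rw [map_sub, hK _ hPx]
    rfl
  have hcross : ⟪Q w, K.starProjection x⟫_𝕜 = 0 := by
    rw [hQ.isSymmetric, hK _ hPx, K.starProjection_inner_eq_zero x _ hPx]
  calc 0 ≤ RCLike.re ⟪Q w, w⟫_𝕜 := hQ.re_inner_nonneg_left w
    _ = RCLike.re ⟪Q w, w + K.starProjection x⟫_𝕜 := by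
      rw [inner_add_right, hcross, add_zero]
    _ = RCLike.re ⟪(Q - K.starProjection) x, x⟫_𝕜 := by rw [hdiff, sub_add_cancel]

end RCLike

section Complex

variable {E : Type*} [NormedAddCommGroup E] [InnerProductSpace ℂ E]

theorem isPositive_of_inner_map_self_nonneg {T : E →ₗ[ℂ] E} (hT : ∀ x, 0 ≤ ⟪x, T x⟫_ℂ) :
    T.IsPositive := by
  have hreal : ∀ x, ⟪T x, x⟫_ℂ = ⟪x, T x⟫_ℂ := fun x => by
    rw [← inner_conj_symm]
    exact (hT x).isSelfAdjoint
  refine (isPositive_iff T).mpr ⟨?_, fun x => hreal x ▸ hT x⟩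
  rw [isSymmetric_iff_inner_map_self_real]
  intro x
  rw [inner_conj_symm, hreal]

theorem isPositive_one_sub_of_inner_map_self_le {T : E →ₗ[ℂ] E}
    (hT : ∀ x, ⟪x, T x⟫_ℂ ≤ ((‖x‖ ^ 2 : ℝ) : ℂ)) : (1 - T).IsPositive :=
  isPositive_of_inner_map_self_nonneg fun x => by
    rw [sub_apply, Module.End.one_apply, inner_sub_right, inner_self_eq_norm_sq_to_K, sub_nonneg]
    exact_mod_cast hT x

end Complex

end LinearMap

/-- If `Q` is a positive contraction on a finite-dimensional complex inner product space `H`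
which accepts every unit vector in `S` with certainty, then `Q` acts as the identity on
`span S`, and the orthogonal projection onto `span S` is dominated by `Q`. -/
theorem stmt0 {H : Type*} [NormedAddCommGroup H] [InnerProductSpace ℂ H]
    [FiniteDimensional ℂ H] (S : Set H) (hS : ∀ φ ∈ S, ‖φ‖ = 1)
    (Q : H →ₗ[ℂ] H)
    (hpos : ∀ x : H, 0 ≤ ⟪x, Q x⟫_ℂ)
    (hcontr : ∀ x : H, ⟪x, Q x⟫_ℂ ≤ ((‖x‖ ^ 2 : ℝ) : ℂ))
    (hone : ∀ φ ∈ S, ⟪φ, Q φ⟫_ℂ = 1) :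
    (∀ x ∈ Submodule.span ℂ S, Q x = x) ∧
    (∀ ψ : H,
      ⟪ψ, ((Submodule.orthogonalProjectionOnto (Submodule.span ℂ S) ψ : H))⟫_ℂ ≤ ⟪ψ, Q ψ⟫_ℂ) := by
  have hQ : Q.IsPositive := LinearMap.isPositive_of_inner_map_self_nonneg hpos
  have hfix : ∀ x ∈ Submodule.span ℂ S, Q x = x := by
    suffices Submodule.span ℂ S ≤ LinearMap.ker (1 - Q) from
      fun x hx => (sub_eq_zero.mp (this hx)).symm
    have hIQ := LinearMap.isPositive_one_sub_of_inner_map_self_le hcontr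
    refine Submodule.span_le.mpr fun φ hφ => hIQ.apply_eq_zero_of_inner_eq_zero ?_
    rw [LinearMap.sub_apply, Module.End.one_apply, inner_sub_left, hQ.isSymmetric, hone φ hφ,
      inner_self_eq_norm_sq_to_K, hS φ hφ]
    norm_num
  refine ⟨hfix, fun ψ => ?_⟩
  have h := (hQ.starProjection_le _ hfix).inner_nonneg_right ψ
  rwa [LinearMap.sub_apply, inner_sub_right, sub_nonneg] at h
end

section
/- Let n ≥ 2 be an integer, set m := n − 1 and α := ln(4m) (natural logarithm). Let r be an integer with r ≥ max{50, 1 + α}, let ε ∈ (0, 1/√6], let d be an integer with d ≥ 2r − 1, and let p be the probability vector on {1, …, d} with p₁ = 1 − 4ε²/m and p_j = 4ε²/(m(d − 1)) for 2 ≤ j ≤ d. Then for every positive integer N with N ≤ m r² / (400 α ε²), the probability, under the i.i.d. distribution p^{⊗N} on words of length N over the ordered alphabet {1, …, d}, that the word has no strictly decreasing subsequence of length r + 1 (i.e., LDS(w) ≤ r) is at least 2^{−1/m}. -/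
/-!
If a word has a strictly decreasing subsequence of length `r + 1`, its first `r` letters form a
strictly decreasing subsequence avoiding the most likely letter, since they all exceed the last
one. A union bound over the `C(N, r)` position sets and `C(d - 1, r)` value sets, each hit with
probability `q ^ r` where `q = 4ε² / (m (d - 1))`, bounds the failure probability by
`C(N, r) C(d - 1, r) q ^ r ≤ (e² · 4Nε² / (m r²)) ^ r ≤ (e² / (100 α)) ^ r ≤ e ^ (-r) ≤ e ^ (-α)`,
which is `1 / (4m)`; here `C(n, r) ≤ (e n / r) ^ r`, `e³ < 100 log 4` and `α ≤ r` are used.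
Bernoulli's inequality `(1 - 1 / (2m)) ^ m ≥ 1 / 2` finishes, as `2 ^ (-1 / m) ≤ 1 - 1 / (2m)`.
-/

open Finset Function Real

section Words

variable {ι κ α : Type*}

/-- `HasStrictAntiSubseq w L` says `LDS(w) ≥ L`. -/
def HasStrictAntiSubseq [Preorder ι] [Preorder α] (w : ι → α) (L : ℕ) : Prop :=
  ∃ f : Fin L → ι, StrictMono f ∧ StrictAnti (w ∘ f)

theorem sum_ite_comp_eq_prod [Fintype ι] [Fintype κ] [Fintype α] [DecidableEq ι]
    [DecidableEq α] (p : α → ℝ) (hp : ∑ a, p a = 1) {g : κ → ι} (hg : Injective g) (v : κ → α) :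
    ∑ w : ι → α, (if w ∘ g = v then ∏ i, p (w i) else 0) = ∏ k, p (v k) := by
  -- the cylinder indicator factors over positions: `F i` pins the letter at `g k` to `v k`
  set F : ι → α → ℝ := fun i a => if ∀ k, g k = i → a = v k then p a else 0
  have hF : ∀ w : ι → α, (if w ∘ g = v then ∏ i, p (w i) else 0) = ∏ i, F i (w i) := by
    intro w
    rw [Fintype.prod_ite_zero]
    congr 1
    simp [funext_iff, forall_comm (α := ι)]
  rw [sum_congr rfl fun w _ => hF w, ← Fintype.prod_sum]
  symm
  refine Fintype.prod_of_injective g hg _ _ (fun i hi => ?_) (fun k => ?_)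
  · simp only [Set.mem_range, not_exists] at hi
    simp [F, hi, hp]
  · simp [F, hg.eq_iff]

theorem sum_ite_comp_mem_eq_sum [Fintype ι] [Fintype κ] [Fintype α] [DecidableEq ι]
    [DecidableEq α] (p : α → ℝ) (hp : ∑ a, p a = 1) {g : κ → ι} (hg : Injective g)
    (A : Finset (κ → α)) :
    ∑ w : ι → α, (if w ∘ g ∈ A then ∏ i, p (w i) else 0) = ∑ v ∈ A, ∏ k, p (v k) := by
  calc ∑ w : ι → α, (if w ∘ g ∈ A then ∏ i, p (w i) else 0)
      = ∑ w : ι → α, ∑ v ∈ A, (if w ∘ g = v then ∏ i, p (w i) else 0) := by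
        simp only [sum_ite_eq]
    _ = ∑ v ∈ A, ∏ k, p (v k) := by
        rw [sum_comm]
        exact sum_congr rfl fun v _ => sum_ite_comp_eq_prod p hp hg v

theorem HasStrictAntiSubseq.exists_strictMono_ne_bot [Preorder ι] [Preorder α] [OrderBot α]
    {w : ι → α} {r : ℕ} (h : HasStrictAntiSubseq w (r + 1)) :
    ∃ g : Fin r → ι, StrictMono g ∧ StrictAnti (w ∘ g) ∧ ∀ k, w (g k) ≠ ⊥ := by
  obtain ⟨f, hf, hwf⟩ := h
  refine ⟨f ∘ Fin.castSucc, hf.comp Fin.strictMono_castSucc,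
    hwf.comp_strictMono Fin.strictMono_castSucc, fun k => ?_⟩
  exact (bot_le.trans_lt (hwf (Fin.castSucc_lt_last k))).ne'

theorem card_le_choose_of_injOn_range [Fintype κ] {β : Type*} [DecidableEq β]
    {F : Finset (κ → β)} {s : Finset β} (hinj : ∀ f ∈ F, Injective f)
    (hrange : Set.InjOn Set.range (F : Set (κ → β))) (hs : ∀ f ∈ F, ∀ k, f k ∈ s) :
    #F ≤ (#s).choose (Fintype.card κ) := by
  rw [← card_powersetCard]
  refine card_le_card_of_injOn (fun f => univ.image f) (fun f hf => ?_) (fun f hf g hg hfg => ?_)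
  · rw [mem_coe, mem_powersetCard]
    refine ⟨fun b hb => ?_, by rw [card_image_of_injective _ (hinj f hf), card_univ]⟩
    obtain ⟨k, -, rfl⟩ := mem_image.1 hb
    exact hs f hf k
  · apply hrange hf hg
    simpa only [← Set.image_univ, ← coe_univ, ← coe_image] using congrArg SetLike.coe hfg

open Classical in
theorem sum_ite_hasStrictAntiSubseq_le [Preorder ι] [Fintype ι] [DecidableEq ι] [Preorder α]
    [OrderBot α] [Fintype α] (p : α → ℝ) (hp0 : ∀ a, 0 ≤ p a) (hp1 : ∑ a, p a = 1) {q : ℝ}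
    (hq0 : 0 ≤ q) (hq : ∀ a ≠ ⊥, p a ≤ q) (r : ℕ) :
    ∑ w : ι → α, (if HasStrictAntiSubseq w (r + 1) then ∏ i, p (w i) else 0) ≤
      (Fintype.card ι).choose r * (Fintype.card α - 1).choose r * q ^ r := by
  set SM := univ.filter fun g : Fin r → ι => StrictMono g
  set SA := univ.filter fun v : Fin r → α => StrictAnti v ∧ ∀ k, v k ≠ ⊥
  have hSM : #SM ≤ (Fintype.card ι).choose r := by
    simpa using card_le_choose_of_injOn_range (F := SM) (s := univ)
      (fun g hg => (mem_filter.1 hg).2.injective)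
      (Set.range_injOn_strictMono.mono fun g hg => (mem_filter.1 hg).2) (by simp)
  have hSA : #SA ≤ (Fintype.card α - 1).choose r := by
    simpa [card_erase_of_mem] using card_le_choose_of_injOn_range (F := SA) (s := univ.erase ⊥)
      (fun v hv => (mem_filter.1 hv).2.1.injective)
      (Set.range_injOn_strictAnti.mono fun v hv => (mem_filter.1 hv).2.1)
      (fun v hv k => mem_erase.2 ⟨(mem_filter.1 hv).2.2 k, mem_univ _⟩)
  have hbad (w : ι → α) : (if HasStrictAntiSubseq w (r + 1) then ∏ i, p (w i) else 0) ≤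
      ∑ g ∈ SM, if w ∘ g ∈ SA then ∏ i, p (w i) else 0 := by
    have hnonneg : ∀ g ∈ SM, 0 ≤ if w ∘ g ∈ SA then ∏ i, p (w i) else 0 :=
      fun g _ => by split_ifs; exacts [prod_nonneg fun i _ => hp0 _, le_rfl]
    split_ifs with h
    · obtain ⟨g, hg, hwg, hbot⟩ := h.exists_strictMono_ne_bot
      refine le_of_eq_of_le ?_ (single_le_sum hnonneg (mem_filter.2 ⟨mem_univ g, hg⟩))
      rw [if_pos (mem_filter.2 ⟨mem_univ _, hwg, hbot⟩)]
    · exact sum_nonneg hnonneg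
  calc _ ≤ ∑ w : ι → α, ∑ g ∈ SM, if w ∘ g ∈ SA then ∏ i, p (w i) else 0 :=
        sum_le_sum fun w _ => hbad w
    _ = ∑ g ∈ SM, ∑ v ∈ SA, ∏ k, p (v k) := by
        rw [sum_comm]
        exact sum_congr rfl fun g hg =>
          sum_ite_comp_mem_eq_sum p hp1 (mem_filter.1 hg).2.injective SA
    _ ≤ ∑ g ∈ SM, ∑ v ∈ SA, q ^ r := by
        gcongr with g _ v hv
        calc ∏ k, p (v k) ≤ ∏ _k : Fin r, q :=
              prod_le_prod (fun k _ => hp0 _) fun k _ => hq _ ((mem_filter.1 hv).2.2 k)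
          _ = q ^ r := by simp
    _ = #SM * #SA * q ^ r := by simp only [sum_const, nsmul_eq_mul, mul_assoc]
    _ ≤ _ := by gcongr

open Classical in
theorem one_sub_le_sum_ite_not_hasStrictAntiSubseq [Preorder ι] [Fintype ι] [DecidableEq ι]
    [Preorder α] [OrderBot α] [Fintype α] (p : α → ℝ) (hp0 : ∀ a, 0 ≤ p a) (hp1 : ∑ a, p a = 1)
    {q : ℝ} (hq0 : 0 ≤ q) (hq : ∀ a ≠ ⊥, p a ≤ q) (r : ℕ) :
    1 - (Fintype.card ι).choose r * (Fintype.card α - 1).choose r * q ^ r ≤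
      ∑ w : ι → α, if ¬ HasStrictAntiSubseq w (r + 1) then ∏ i, p (w i) else 0 := by
  have htotal : ∑ w : ι → α, ∏ i, p (w i) = 1 := by
    rw [← Fintype.prod_sum]
    simp [hp1]
  have hsplit : (∑ w : ι → α, if ¬ HasStrictAntiSubseq w (r + 1) then ∏ i, p (w i) else 0) +
      (∑ w : ι → α, if HasStrictAntiSubseq w (r + 1) then ∏ i, p (w i) else 0) = 1 := by
    rw [← sum_add_distrib, ← htotal]
    exact sum_congr rfl fun w _ => by split_ifs <;> simp
  linarith [sum_ite_hasStrictAntiSubseq_le (ι := ι) p hp0 hp1 hq0 hq r]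

end Words

theorem Fin.sum_ite_val_eq_zero (d : ℕ) [NeZero d] (a b : ℝ) :
    ∑ j : Fin d, (if (j : ℕ) = 0 then a else b) = a + (d - 1) * b := by
  obtain ⟨d, rfl⟩ := Nat.exists_eq_succ_of_ne_zero (NeZero.ne d)
  simp [Fin.sum_univ_succ]

theorem Real.one_lt_log_four : 1 < log 4 :=
  (lt_log_iff_exp_lt (by norm_num)).2 (exp_one_lt_d9.trans (by norm_num))

theorem Nat.choose_le_exp_one_mul_div_pow (n r : ℕ) : (n.choose r : ℝ) ≤ (exp 1 * n / r) ^ r := by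
  rcases r.eq_zero_or_pos with rfl | hr
  · simp
  have hfact : (r : ℝ) ^ r ≤ exp r * r.factorial := by
    rw [← div_le_iff₀ (by positivity)]
    exact pow_div_factorial_le_exp _ (Nat.cast_nonneg r) r
  calc (n.choose r : ℝ) ≤ n ^ r / r.factorial := Nat.choose_le_pow_div r n
    _ ≤ (exp 1 * n / r) ^ r := by
        rw [div_pow, mul_pow, exp_one_pow, div_le_div_iff₀ (by positivity) (by positivity)]
        calc (n : ℝ) ^ r * r ^ r ≤ n ^ r * (exp r * r.factorial) := by gcongr
          _ = _ := by ring

theorem choose_mul_choose_mul_pow_le_exp_neg {N D r : ℕ} {q a : ℝ} (hq : 0 ≤ q)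
    (ha : log 4 ≤ a) (hr : a ≤ r) (hX : N * D * q ≤ r ^ 2 / (100 * a)) :
    (N.choose r : ℝ) * D.choose r * q ^ r ≤ exp (-a) := by
  have ha0 : 0 < a := one_pos.trans (one_lt_log_four.trans_le ha)
  have hr0 : (0 : ℝ) < r := ha0.trans_le hr
  have he3 : exp 1 ^ 3 < 100 * a := by
    calc exp 1 ^ 3 < 2.7182818286 ^ 3 := by gcongr; exact exp_one_lt_d9
      _ < 100 * 1 := by norm_num
      _ ≤ 100 * a := by linarith [one_lt_log_four]
  have hbase : exp 1 ^ 2 * (N * D * q) / r ^ 2 ≤ exp (-1) :=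
    calc exp 1 ^ 2 * (N * D * q) / r ^ 2 ≤ exp 1 ^ 2 * (r ^ 2 / (100 * a)) / r ^ 2 := by gcongr
      _ = exp 1 ^ 2 / (100 * a) := by field_simp
      _ ≤ exp (-1) := by
        rw [div_le_iff₀ (by positivity), exp_neg, inv_mul_eq_div, le_div_iff₀ (exp_pos 1),
          ← pow_succ]
        exact he3.le
  calc (N.choose r : ℝ) * D.choose r * q ^ r
      ≤ (exp 1 * N / r) ^ r * (exp 1 * D / r) ^ r * q ^ r := by
        gcongr <;> exact Nat.choose_le_exp_one_mul_div_pow _ _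
    _ = (exp 1 ^ 2 * (N * D * q) / r ^ 2) ^ r := by rw [← mul_pow, ← mul_pow]; ring
    _ ≤ exp (-1) ^ r := by gcongr
    _ = exp (-r) := by rw [← exp_nat_mul]; ring_nf
    _ ≤ exp (-a) := exp_le_exp.2 (neg_le_neg hr)

theorem two_rpow_neg_one_div_le (k : ℕ) (hk : k ≠ 0) :
    (2 : ℝ) ^ (-(1 : ℝ) / k) ≤ 1 - 1 / (2 * k) := by
  have hk1 : (1 : ℝ) ≤ k := by exact_mod_cast Nat.one_le_iff_ne_zero.2 hk
  have hsmall : 1 / (2 * k) ≤ (1 : ℝ) := by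
    rw [div_le_one (by positivity)]
    linarith
  have hbern : (2 : ℝ)⁻¹ ≤ (1 - 1 / (2 * k)) ^ k := by
    calc (2 : ℝ)⁻¹ = 1 + k * (-(1 / (2 * k))) := by field_simp; norm_num
      _ ≤ (1 + -(1 / (2 * k))) ^ k := one_add_mul_le_pow (by linarith) k
      _ = _ := by rw [← sub_eq_add_neg]
  calc (2 : ℝ) ^ (-(1 : ℝ) / k) = (2⁻¹) ^ ((k : ℝ)⁻¹) := by
        rw [inv_rpow zero_le_two, ← rpow_neg zero_le_two, neg_div, one_div]
    _ ≤ ((1 - 1 / (2 * k)) ^ k) ^ ((k : ℝ)⁻¹) := by gcongr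
    _ = 1 - 1 / (2 * k) := pow_rpow_inv_natCast (by linarith) hk

open Classical in
theorem one_sub_le_sum_ite_not_hasStrictAntiSubseq_fin {d : ℕ} (hd : 1 < d) (N r : ℕ) {δ : ℝ}
    (hδ0 : 0 ≤ δ) (hδ1 : δ ≤ 1) :
    1 - N.choose r * (d - 1).choose r * (δ / ((d : ℝ) - 1)) ^ r ≤
      ∑ w : Fin N → Fin d, if ¬ HasStrictAntiSubseq w (r + 1) then
        ∏ i, (if (w i : ℕ) = 0 then 1 - δ else δ / ((d : ℝ) - 1)) else 0 := by
  have : NeZero d := ⟨by omega⟩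
  have hd1 : (0 : ℝ) < d - 1 := by
    rw [sub_pos]
    exact_mod_cast hd
  have h := one_sub_le_sum_ite_not_hasStrictAntiSubseq (ι := Fin N) (q := δ / ((d : ℝ) - 1))
    (fun j : Fin d => if (j : ℕ) = 0 then 1 - δ else δ / ((d : ℝ) - 1))
    (fun j => by split_ifs <;> positivity)
    (by rw [Fin.sum_ite_val_eq_zero]; field_simp; ring) (by positivity)
    (fun j hj => by simp [Fin.val_eq_zero_iff, show j ≠ 0 by simpa [bot_eq_zero] using hj]) r
  rwa [Fintype.card_fin, Fintype.card_fin] at h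

open Classical in
theorem stmt2_general (n r d N : ℕ) (hn : 2 ≤ n)
    (hralpha : 1 + Real.log (4 * ((n : ℝ) - 1)) ≤ (r : ℝ))
    (ε : ℝ) (hε0 : 0 < ε) (hε1 : ε ≤ 1 / Real.sqrt 6)
    (hd : 2 * r - 1 ≤ d)
    (hNle : (N : ℝ) ≤ ((n : ℝ) - 1) * (r : ℝ) ^ 2 /
        (400 * Real.log (4 * ((n : ℝ) - 1)) * ε ^ 2)) :
    (2 : ℝ) ^ (-(1 : ℝ) / ((n : ℝ) - 1)) ≤
      ∑ w : Fin N → Fin d,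
        if ¬ ∃ f : Fin (r + 1) → Fin N, StrictMono f ∧ StrictAnti (w ∘ f) then
          ∏ i, (if (w i : ℕ) = 0 then 1 - 4 * ε ^ 2 / ((n : ℝ) - 1)
                else 4 * ε ^ 2 / (((n : ℝ) - 1) * ((d : ℝ) - 1)))
        else 0 := by
  obtain ⟨k, rfl⟩ : ∃ k, n = k + 1 := ⟨n - 1, by omega⟩
  simp only [Nat.cast_add, Nat.cast_one, add_sub_cancel_right] at hralpha hNle ⊢
  simp only [← div_div]
  have hk : (1 : ℝ) ≤ k := by exact_mod_cast (by omega : 1 ≤ k)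
  have hlog : log 4 ≤ log (4 * k) := log_le_log (by norm_num) (by linarith)
  have hα : 0 < log (4 * k) := one_pos.trans (one_lt_log_four.trans_le hlog)
  have hr : 2 ≤ r := by exact_mod_cast (by linarith [one_lt_log_four] : (2 : ℝ) ≤ r)
  have hd1 : (0 : ℝ) < d - 1 := sub_pos.2 (by exact_mod_cast (by omega : 1 < d))
  have hδ : 4 * ε ^ 2 / k ≤ 1 := by
    have := pow_le_pow_left₀ hε0.le hε1 2
    rw [div_pow, one_pow, sq_sqrt (by norm_num)] at this
    rw [div_le_one (by positivity)]
    linarith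
  have hX : (N : ℝ) * (d - 1 : ℕ) * (4 * ε ^ 2 / k / (d - 1)) ≤ r ^ 2 / (100 * log (4 * k)) :=
    calc (N : ℝ) * (d - 1 : ℕ) * (4 * ε ^ 2 / k / (d - 1)) = 4 * ε ^ 2 / k * N := by
          rw [Nat.cast_pred (by omega)]; field_simp
      _ ≤ 4 * ε ^ 2 / k * (k * r ^ 2 / (400 * log (4 * k) * ε ^ 2)) := by gcongr
      _ = r ^ 2 / (100 * log (4 * k)) := by field_simp; ring
  have hbad := choose_mul_choose_mul_pow_le_exp_neg (div_nonneg (by positivity) hd1.le) hlog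
    (by linarith) hX
  rw [exp_neg, exp_log (by positivity)] at hbad
  refine le_trans ?_ ((one_sub_le_sum_ite_not_hasStrictAntiSubseq_fin (by omega) N r
    (by positivity) hδ).trans_eq (sum_congr rfl fun w _ => by congr 1))
  have : (4 * k : ℝ)⁻¹ ≤ 1 / (2 * k) := by
    rw [inv_eq_one_div]
    gcongr
    linarith
  linarith [two_rpow_neg_one_div_le k (by omega)]

open Classical in
/-- Hard-instance lower bound: for a tree on `n ≥ 2` vertices (`m = n - 1` edges),
`α = log(4m)`, bond dimension `r ≥ max{50, 1 + α}`, `ε ∈ (0, 1/√6]`, alphabet size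
`d ≥ 2r - 1`, and the spiked distribution `p = (1 - 4ε²/m, 4ε²/(m(d-1)), …)`, every
`N ≤ m r² / (400 α ε²)` has: the `p^{⊗N}`-probability that a random word of length `N` has no
strictly decreasing subsequence of length `r + 1` is at least `2^{-1/m}`. -/
theorem stmt2 (n r d N : ℕ) (hn : 2 ≤ n)
    (hr50 : 50 ≤ r) (hralpha : 1 + Real.log (4 * ((n : ℝ) - 1)) ≤ (r : ℝ))
    (ε : ℝ) (hε0 : 0 < ε) (hε1 : ε ≤ 1 / Real.sqrt 6)
    (hd : 2 * r - 1 ≤ d) (hN : 0 < N)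
    (hNle : (N : ℝ) ≤ ((n : ℝ) - 1) * (r : ℝ) ^ 2 /
        (400 * Real.log (4 * ((n : ℝ) - 1)) * ε ^ 2)) :
    (2 : ℝ) ^ (-(1 : ℝ) / ((n : ℝ) - 1)) ≤
      ∑ w : Fin N → Fin d,
        if ¬ ∃ f : Fin (r + 1) → Fin N, StrictMono f ∧ StrictAnti (w ∘ f) then
          ∏ i, (if (w i : ℕ) = 0 then 1 - 4 * ε ^ 2 / ((n : ℝ) - 1)
                else 4 * ε ^ 2 / (((n : ℝ) - 1) * ((d : ℝ) - 1)))
        else 0 :=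
  stmt2_general n r d N hn hralpha ε hε0 hε1 hd hNle
end

section
/- There exist universal constants c₁ ∈ (0, 1/2] and c₂ > 0 with the following property. Let a < b < c be a three-letter ordered alphabet, let N ≥ 3 be an integer, let t ∈ [0, 1/3], and let x, y be reals with t ≤ y ≤ x ≤ (1 − y)/2. Consider the i.i.d. distribution on words of length N in which each letter independently equals a with probability 1 − x − y, equals b with probability x, and equals c with probability y. If N·t ≤ c₁, then the probability that the word contains c, b, a as a subsequence (i.e., there exist indices i < j < k with w_i = c, w_j = b, w_k = a) is at least N²t²/4 − c₂·t. -/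
/-!
Write `P` for the probability that the word contains `c, b, a`. There are two regimes.

If `N (x + y) ≤ 1/4`, Bernoulli gives `(1 - x - y) ^ (N - 2) ≥ 3/4`, and counting only the words
with a single `c`, a single later `b`, and `a` everywhere else (in particular in the last
position) gives `P ≥ (3/4) · C(N - 1, 2) · x y ≥ (3/8) (N - 1) (N - 2) t²`, which is at least
`N² t² / 4 - 2 t`.

Otherwise `N x > 1/8`. Cut the word into consecutive blocks of lengths `h, h, r` with `h ≈ N/3`:
`P` is at least the probability that `c` occurs in the first block, `b` in the second and `a` in
the third, i.e. `(1 - (1 - y)^h) (1 - (1 - x)^h) (1 - (x + y)^r) ≳ h t ≳ N t`, and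
`N t ≥ 1000 · N² t²` dominates `N² t² / 4`.
-/

open Finset

lemma one_sub_pow_mul_one_add_mul_le_one {s : ℝ} (hs0 : -1 ≤ s) (hs1 : s ≤ 1) (n : ℕ) :
    (1 - s) ^ n * (1 + n * s) ≤ 1 :=
  calc (1 - s) ^ n * (1 + n * s) ≤ (1 - s) ^ n * (1 + s) ^ n :=
        mul_le_mul_of_nonneg_left (one_add_mul_le_pow (by linarith) n) (pow_nonneg (by linarith) n)
    _ = (1 - s ^ 2) ^ n := by rw [← mul_pow]; ring
    _ ≤ 1 := pow_le_one₀ (by nlinarith) (by nlinarith)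

lemma mul_div_two_le_one_sub_one_sub_pow {s : ℝ} {n : ℕ} (hs0 : 0 ≤ s) (hs1 : s ≤ 1)
    (hns : n * s ≤ 1) : n * s / 2 ≤ 1 - (1 - s) ^ n := by
  have key := one_sub_pow_mul_one_add_mul_le_one (by linarith) hs1 n
  have hns0 : 0 ≤ n * s := by positivity
  nlinarith [mul_nonneg hns0 (sub_nonneg.2 hns)]

lemma prod_ite_eq_ite_eq {ι M : Type*} [Fintype ι] [DecidableEq ι] [CommMonoid M] {i j : ι}
    (hij : i ≠ j) (u v z : M) :
    ∏ k, (if k = i then u else if k = j then v else z) = u * v * z ^ (Fintype.card ι - 2) := by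
  have hj : j ∈ univ.erase i := mem_erase.2 ⟨hij.symm, mem_univ j⟩
  rw [← mul_prod_erase univ _ (mem_univ i), ← mul_prod_erase _ _ hj,
    prod_congr rfl fun k hk => by
      rw [if_neg (ne_of_mem_erase (mem_of_mem_erase hk)), if_neg (ne_of_mem_erase hk)],
    prod_const, card_erase_of_mem hj, card_erase_of_mem (mem_univ i), card_univ, if_pos rfl,
    if_neg hij.symm, if_pos rfl, mul_assoc, Nat.sub_sub]

namespace Word

variable {α : Type*} [Fintype α]

open Classical in
noncomputable def prob (p : α → ℝ) (n : ℕ) (E : (Fin n → α) → Prop) : ℝ :=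
  ∑ w : Fin n → α, if E w then ∏ i, p (w i) else 0

variable (p : α → ℝ) {n : ℕ}

lemma prob_eq (E : (Fin n → α) → Prop) [DecidablePred E] :
    prob p n E = ∑ w : Fin n → α, if E w then ∏ i, p (w i) else 0 := by
  unfold prob; congr!

lemma prob_mono (hp : 0 ≤ p) {E F : (Fin n → α) → Prop} (h : ∀ w, E w → F w) :
    prob p n E ≤ prob p n F := by
  classical
  rw [prob_eq, prob_eq]
  gcongr with w
  split_ifs with hE hF
  · rfl
  · exact absurd (h w hE) hF
  · exact prod_nonneg fun i _ => hp _
  · rfl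

lemma prob_forall_mem (S : Finset α) :
    prob p n (fun w => ∀ i, w i ∈ S) = (∑ a ∈ S, p a) ^ n := by
  classical
  rw [prob_eq, ← sum_filter, ← Fin.prod_const, prod_univ_sum]
  congr 1
  ext w
  simp [Fintype.mem_piFinset]

lemma prob_add_prob_not (E : (Fin n → α) → Prop) :
    prob p n E + prob p n (fun w => ¬ E w) = (∑ a, p a) ^ n := by
  classical
  rw [prob_eq, prob_eq, ← sum_add_distrib, ← prob_forall_mem p univ, prob_eq]
  refine sum_congr rfl fun w _ => ?_
  by_cases h : E w <;> simp [h]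

lemma prob_exists_eq [DecidableEq α] (hp : ∑ a, p a = 1) (a : α) :
    prob p n (fun w => ∃ i, w i = a) = 1 - (1 - p a) ^ n := by
  have h := prob_add_prob_not p (n := n) (fun w => ∃ i, w i = a)
  have hnot : (fun w : Fin n → α => ¬ ∃ i, w i = a) = fun w => ∀ i, w i ∈ univ.erase a := by
    ext w; simp
  rw [hnot, prob_forall_mem, sum_erase_eq_sub (mem_univ a), hp, one_pow] at h
  linarith

lemma prob_append {m : ℕ} (E : (Fin m → α) → Prop) (F : (Fin n → α) → Prop) :
    prob p (m + n) (fun w => E (fun i => w (Fin.castAdd n i)) ∧ F (fun j => w (Fin.natAdd m j)))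
      = prob p m E * prob p n F := by
  classical
  rw [prob_eq, prob_eq, prob_eq, sum_mul_sum, ← Fintype.sum_prod_type',
    ← (Fin.appendEquiv m n).sum_comp]
  refine Fintype.sum_congr _ _ fun ⟨u, v⟩ => ?_
  simp only [Fin.appendEquiv_apply, Fin.append_left, Fin.append_right, Fin.prod_univ_add]
  by_cases hE : E u <;> by_cases hF : F v <;> simp [hE, hF]

lemma sum_le_prob {β : Type*} (hp : 0 ≤ p) {E : (Fin n → α) → Prop} (S : Finset β)
    {φ : β → Fin n → α} (hφ : Set.InjOn φ S) (hE : ∀ s ∈ S, E (φ s)) :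
    ∑ s ∈ S, ∏ i, p (φ s i) ≤ prob p n E := by
  classical
  rw [← sum_image (f := fun w => ∏ i, p (w i)) hφ, prob_eq, ← sum_filter]
  refine sum_le_sum_of_subset_of_nonneg ?_ fun w _ _ => prod_nonneg fun i _ => hp _
  intro w hw
  obtain ⟨s, hs, rfl⟩ := mem_image.mp hw
  exact mem_filter.mpr ⟨mem_univ _, hE s hs⟩

def ContainsSubseq (c b a : α) (w : Fin n → α) : Prop :=
  ∃ i j k, i < j ∧ j < k ∧ w i = c ∧ w j = b ∧ w k = a

lemma choose_two_mul_le_prob_containsSubseq [DecidableEq α] (hp : 0 ≤ p) {a b c : α}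
    (hab : a ≠ b) (hac : a ≠ c) (hbc : b ≠ c) (m : ℕ) :
    (m.choose 2 : ℝ) * (p c * p b * p a ^ (m - 1)) ≤ prob p (m + 1) (ContainsSubseq c b a) := by
  let S : Finset (Fin m × Fin m) := {q | q.1 < q.2}
  let word (q : Fin m × Fin m) (k : Fin (m + 1)) : α :=
    if k = q.1.castSucc then c else if k = q.2.castSucc then b else a
  have hc (q) (k) : word q k = c ↔ k = q.1.castSucc := by
    simp only [word]; split_ifs <;> simp_all
  have hb (q) (hq : q ∈ S) (k) : word q k = b ↔ k = q.2.castSucc := by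
    have hne : q.1 ≠ q.2 := (mem_filter.1 hq).2.ne
    simp only [word]; split_ifs <;> simp_all [hbc.symm]
  have hinj : Set.InjOn word S := by
    intro q hq q' hq' h
    have h1 := (hc q' _).1 (h ▸ (hc q _).2 rfl)
    have h2 := (hb q' hq' _).1 (h ▸ (hb q hq _).2 rfl)
    exact Prod.ext (Fin.castSucc_injective _ h1) (Fin.castSucc_injective _ h2)
  have hpat (q) (hq : q ∈ S) : ContainsSubseq c b a (word q) := by
    refine ⟨_, _, Fin.last m, Fin.castSucc_lt_castSucc_iff.2 (mem_filter.1 hq).2,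
      Fin.castSucc_lt_last _, (hc q _).2 rfl, (hb q hq _).2 rfl, ?_⟩
    simp [word, (Fin.castSucc_lt_last _).ne']
  have hprod (q) (hq : q ∈ S) : ∏ k, p (word q k) = p c * p b * p a ^ (m - 1) := by
    simp only [word, apply_ite p]
    rw [prod_ite_eq_ite_eq (Fin.castSucc_injective _ |>.ne (mem_filter.1 hq).2.ne),
      Fintype.card_fin, show m + 1 - 2 = m - 1 by omega]
  have hcard : S.card = m.choose 2 := by
    simpa using card_product_filter_lt (s := (univ : Finset (Fin m)))
  calc (m.choose 2 : ℝ) * (p c * p b * p a ^ (m - 1))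
      = ∑ q ∈ S, ∏ k, p (word q k) := by rw [sum_congr rfl hprod, sum_const, hcard, nsmul_eq_mul]
    _ ≤ prob p (m + 1) (ContainsSubseq c b a) := sum_le_prob p hp S hinj hpat

lemma one_sub_pow_mul_le_prob_containsSubseq [DecidableEq α] (hp : 0 ≤ p) (hp1 : ∑ a, p a = 1)
    (a b c : α) (h r : ℕ) :
    (1 - (1 - p c) ^ h) * (1 - (1 - p b) ^ h) * (1 - (1 - p a) ^ r)
      ≤ prob p (h + h + r) (ContainsSubseq c b a) := by
  calc (1 - (1 - p c) ^ h) * (1 - (1 - p b) ^ h) * (1 - (1 - p a) ^ r)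
      = prob p h (fun u => ∃ i, u i = c) * prob p h (fun v => ∃ j, v j = b) *
          prob p r (fun v => ∃ k, v k = a) := by
        rw [prob_exists_eq p hp1, prob_exists_eq p hp1, prob_exists_eq p hp1]
    _ = prob p (h + h) (fun u => (∃ i, u (Fin.castAdd h i) = c) ∧ ∃ j, u (Fin.natAdd h j) = b) *
          prob p r (fun v => ∃ k, v k = a) := by
        rw [← prob_append p (fun u => ∃ i, u i = c) (fun v => ∃ j, v j = b)]
    _ = prob p (h + h + r) fun w =>
          ((∃ i, w (Fin.castAdd r (Fin.castAdd h i)) = c) ∧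
            ∃ j, w (Fin.castAdd r (Fin.natAdd h j)) = b) ∧ ∃ k, w (Fin.natAdd (h + h) k) = a :=
        (prob_append p _ _).symm
    _ ≤ prob p (h + h + r) (ContainsSubseq c b a) := by
      refine prob_mono p hp fun w ⟨⟨⟨i, hi⟩, ⟨j, hj⟩⟩, ⟨k, hk⟩⟩ => ⟨_, _, _, ?_, ?_, hi, hj, hk⟩ <;>
        simp [Fin.lt_def] <;> omega

end Word

open Word

section ThreeLetters

variable {x y : ℝ}

lemma letterProb_nonneg (hx : 0 ≤ x) (hy : 0 ≤ y) (hxy : x + y ≤ 1) :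
    0 ≤ (![1 - x - y, x, y] : Fin 3 → ℝ) := by
  intro i; fin_cases i <;> simp <;> linarith

lemma sum_letterProb : ∑ i, (![1 - x - y, x, y] : Fin 3 → ℝ) i = 1 := by
  simp [Fin.sum_univ_three]; ring

lemma le_prob_containsSubseq_of_small {m : ℕ} {t : ℝ} (ht : 0 ≤ t) (ht1 : t ≤ 1) (hty : t ≤ y)
    (hyx : y ≤ x) (hsmall : ((m + 1 : ℕ) : ℝ) * (x + y) ≤ 1 / 4) :
    ((m + 1 : ℕ) : ℝ) ^ 2 * t ^ 2 / 4 - 2 * t ≤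
      prob ![1 - x - y, x, y] (m + 1) (ContainsSubseq 2 1 0) := by
  push_cast at hsmall
  have hm : (0 : ℝ) ≤ m := m.cast_nonneg
  have hpow : 3 / 4 ≤ (1 - x - y) ^ (m - 1) := by
    have := one_add_mul_sub_le_pow (a := 1 - x - y) (by nlinarith) (m - 1)
    rcases m.eq_zero_or_pos with rfl | hm1
    · norm_num
    · push_cast [hm1] at this; nlinarith
  have hxy : t ^ 2 ≤ y * x := by nlinarith
  have hbound := choose_two_mul_le_prob_containsSubseq ![1 - x - y, x, y]
    (letterProb_nonneg (by linarith) (by linarith) (by nlinarith)) (a := 0) (b := 1) (c := 2)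
    (by decide) (by decide) (by decide) m
  simp only [Nat.cast_choose_two, Matrix.cons_val] at hbound
  have hpairs : (0 : ℝ) ≤ m * (m - 1) / 2 := by
    rcases m with _ | m
    · simp
    · push_cast; simp only [add_sub_cancel_right]; positivity
  calc ((m + 1 : ℕ) : ℝ) ^ 2 * t ^ 2 / 4 - 2 * t ≤ m * (m - 1) / 2 * (t ^ 2 * (3 / 4)) := by
        push_cast; nlinarith [sq_nonneg ((m : ℝ) - 7 / 2)]
    _ ≤ m * (m - 1) / 2 * (y * x * (1 - x - y) ^ (m - 1)) := by gcongr; nlinarith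
    _ ≤ _ := hbound

lemma le_prob_containsSubseq_of_large {h r : ℕ} {t : ℝ} (h1 : 1 ≤ h) (hr1 : 1 ≤ r)
    (hr : r ≤ 3 * h) (ht : 0 ≤ t) (hty : t ≤ y) (hyx : y ≤ x) (hxy : x + y ≤ 2 / 3)
    (hlarge : 1 / 4 < ((h + h + r : ℕ) : ℝ) * (x + y))
    (hNt : ((h + h + r : ℕ) : ℝ) * t ≤ 1 / 1000) :
    ((h + h + r : ℕ) : ℝ) ^ 2 * t ^ 2 / 4 ≤
      prob ![1 - x - y, x, y] (h + h + r) (ContainsSubseq 2 1 0) := by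
  have hbound := one_sub_pow_mul_le_prob_containsSubseq ![1 - x - y, x, y]
    (letterProb_nonneg (by linarith) (by linarith) (by linarith)) sum_letterProb 0 1 2 h r
  simp only [Matrix.cons_val] at hbound
  rw [show 1 - (1 - x - y) = x + y by ring] at hbound
  push_cast at hlarge hNt ⊢
  have hH : (1 : ℝ) ≤ h := by exact_mod_cast h1
  have hR : (1 : ℝ) ≤ r := by exact_mod_cast hr1
  have hR3 : (r : ℝ) ≤ 3 * h := by exact_mod_cast hr
  have hc : h * t / 2 ≤ 1 - (1 - y) ^ h :=
    calc h * t / 2 ≤ 1 - (1 - t) ^ h :=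
          mul_div_two_le_one_sub_one_sub_pow ht (by nlinarith) (by nlinarith)
      _ ≤ 1 - (1 - y) ^ h := by gcongr; linarith
  have hb : 1 / 80 ≤ 1 - (1 - x) ^ h :=
    calc (1 : ℝ) / 80 = h * (1 / (40 * h)) / 2 := by field_simp; norm_num
      _ ≤ 1 - (1 - 1 / (40 * h)) ^ h :=
          mul_div_two_le_one_sub_one_sub_pow (by positivity)
            (by rw [div_le_one (by positivity)]; linarith) (by field_simp; norm_num)
      _ ≤ 1 - (1 - x) ^ h := by
          gcongr
          · linarith
          · rw [div_le_iff₀ (by positivity)]; nlinarith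
  have ha : 1 / 3 ≤ 1 - (x + y) ^ r := by
    have := pow_le_of_le_one (by linarith) (by linarith) (by omega : r ≠ 0) (a := x + y)
    linarith
  have hN0 : 0 ≤ ((h : ℝ) + h + r) * t := by positivity
  have hht : 0 ≤ (h : ℝ) * t := by positivity
  calc ((h : ℝ) + h + r) ^ 2 * t ^ 2 / 4 ≤ h * t / 2 * (1 / 80) * (1 / 3) := by
        nlinarith [mul_le_mul_of_nonneg_right hNt hN0]
    _ ≤ (1 - (1 - y) ^ h) * (1 - (1 - x) ^ h) * (1 - (x + y) ^ r) :=
        mul_le_mul (mul_le_mul hc hb (by norm_num) (by linarith)) ha (by norm_num)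
          (mul_nonneg (by linarith) (by linarith))
    _ ≤ _ := hbound

end ThreeLetters

open Classical in
/-- Three-letter LDS lemma: there are universal constants `c₁ ∈ (0, 1/2]` and `c₂ > 0` such that
for any `N ≥ 3`, `t ∈ [0, 1/3]`, and letter probabilities `(1-x-y, x, y)` with
`t ≤ y ≤ x ≤ (1-y)/2`, if `N·t ≤ c₁` then the probability that an i.i.d. word of length `N`
over the ordered alphabet `{a < b < c} = {0 < 1 < 2}` contains `c, b, a` as a subsequence is
at least `N²t²/4 - c₂·t`. -/
theorem stmt3 :
    ∃ c₁ c₂ : ℝ, 0 < c₁ ∧ c₁ ≤ 1 / 2 ∧ 0 < c₂ ∧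
      ∀ (N : ℕ) (t x y : ℝ), 3 ≤ N → 0 ≤ t → t ≤ 1 / 3 →
        t ≤ y → y ≤ x → x ≤ (1 - y) / 2 → (N : ℝ) * t ≤ c₁ →
        (N : ℝ) ^ 2 * t ^ 2 / 4 - c₂ * t ≤
          ∑ w : Fin N → Fin 3,
            if ∃ i j k : Fin N, i < j ∧ j < k ∧ w i = 2 ∧ w j = 1 ∧ w k = 0 then
              ∏ i, (![1 - x - y, x, y] : Fin 3 → ℝ) (w i)
            else 0 := by
  refine ⟨1 / 1000, 2, by norm_num, by norm_num, by norm_num, ?_⟩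
  intro N t x y hN ht ht3 hty hyx hxy hNt
  suffices h : (N : ℝ) ^ 2 * t ^ 2 / 4 - 2 * t ≤ prob ![1 - x - y, x, y] N (ContainsSubseq 2 1 0) by
    rw [prob_eq] at h
    convert h using 4
    rfl
  rcases le_or_gt ((N : ℝ) * (x + y)) (1 / 4) with hsmall | hlarge
  · obtain ⟨m, rfl⟩ : ∃ m, N = m + 1 := ⟨N - 1, by omega⟩
    exact le_prob_containsSubseq_of_small ht (by linarith) hty hyx hsmall
  · obtain ⟨h, r, rfl, h1, hr1, hr⟩ : ∃ h r, N = h + h + r ∧ 1 ≤ h ∧ 1 ≤ r ∧ r ≤ 3 * h :=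
      ⟨N / 3, N - 2 * (N / 3), by omega, by omega, by omega, by omega⟩
    have := le_prob_containsSubseq_of_large h1 hr1 hr ht hty hyx (by linarith) hlarge hNt
    linarith
end

section
/- Let a < b < c be a three-letter ordered alphabet, let N be a positive integer, let t ∈ [0, 1/3], and let x, y be reals with t ≤ y ≤ x ≤ (1 − y)/2. Let P(x, y) denote the probability, under the i.i.d. distribution on words of length N with letter probabilities p(a) = 1 − x − y, p(b) = x, p(c) = y, that the word contains c, b, a as a subsequence. Then P(x, y) ≥ P(t, t); that is, among all admissible (x, y), the probability is minimized by the choice x = y = t. -/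
/-!
Reading a word letter by letter and tracking the longest prefix of `c b a` seen so far as a
subsequence gives a Markov chain that leaves state `i` with the probability of the `i`-th
pattern letter. Hence the probability is `x y (1 - x - y) h_{N-3}(1 - y, 1 - x, x + y, 1)`,
with `h` the complete homogeneous symmetric polynomial; in particular it is symmetric in
`x, y`. For fixed `x` and `u + v`, the weight `(1 - u)(1 - v) h(u, v, 1 - x, 1)` grows as
`u = x + y` and `v = 1 - y` move towards each other, i.e. as `y` grows. Hence
`P(t, t) ≤ P(t, x) = P(x, t) ≤ P(x, y)`.
-/

open Classical in
/-- The probability that an i.i.d. word of length `N` over the ordered alphabet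
`{a < b < c} = {0 < 1 < 2}` with letter probabilities `(1 - x - y, x, y)` contains
`c, b, a` as a subsequence. -/
noncomputable def subseqProb (N : ℕ) (x y : ℝ) : ℝ :=
  ∑ w : Fin N → Fin 3,
    if ∃ i j k : Fin N, i < j ∧ j < k ∧ w i = 2 ∧ w j = 1 ∧ w k = 0 then
      ∏ i, (![1 - x - y, x, y] : Fin 3 → ℝ) (w i)
    else 0

def completeHomog : List ℝ → ℕ → ℝ
  | _, 0 => 1
  | [], _ + 1 => 0
  | a :: l, n + 1 => completeHomog l (n + 1) + a * completeHomog (a :: l) n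

@[simp]
theorem completeHomog_zero (l : List ℝ) : completeHomog l 0 = 1 := by
  cases l <;> simp [completeHomog]

@[simp]
theorem completeHomog_nil_succ (n : ℕ) : completeHomog [] (n + 1) = 0 := by
  simp [completeHomog]

theorem completeHomog_cons_succ (a : ℝ) (l : List ℝ) (n : ℕ) :
    completeHomog (a :: l) (n + 1) = completeHomog l (n + 1) + a * completeHomog (a :: l) n := by
  simp [completeHomog]

theorem completeHomog_singleton (a : ℝ) (n : ℕ) : completeHomog [a] n = a ^ n := by
  induction n with
  | zero => simp
  | succ n ih => rw [completeHomog_cons_succ, ih]; simp [pow_succ, mul_comm]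

theorem completeHomog_nonneg {l : List ℝ} (hl : ∀ a ∈ l, 0 ≤ a) (n : ℕ) :
    0 ≤ completeHomog l n := by
  induction l generalizing n with
  | nil => cases n <;> simp
  | cons a l ihl =>
    induction n with
    | zero => simp
    | succ n ihn =>
      rw [completeHomog_cons_succ]
      exact add_nonneg (ihl (fun b hb ↦ hl b (by simp [hb])) _)
        (mul_nonneg (hl a (by simp)) ihn)

theorem completeHomog_cons_sub_cons (a b : ℝ) (l : List ℝ) (n : ℕ) :
    completeHomog (a :: l) (n + 1) - completeHomog (b :: l) (n + 1) =
      (a - b) * completeHomog (a :: b :: l) n := by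
  induction n with
  | zero => simp [completeHomog_cons_succ]
  | succ n ih =>
    rw [completeHomog_cons_succ a l, completeHomog_cons_succ b l,
      completeHomog_cons_succ a (b :: l)]
    linear_combination a * ih

theorem completeHomog_swap (a b : ℝ) (l : List ℝ) (n : ℕ) :
    completeHomog (a :: b :: l) n = completeHomog (b :: a :: l) n := by
  induction n with
  | zero => simp
  | succ n ih =>
    rw [completeHomog_cons_succ a (b :: l), completeHomog_cons_succ b (a :: l)]
    linear_combination completeHomog_cons_sub_cons b a l n + a * ih

theorem completeHomog_cons_congr (a : ℝ) {l l' : List ℝ}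
    (h : ∀ n, completeHomog l n = completeHomog l' n) (n : ℕ) :
    completeHomog (a :: l) n = completeHomog (a :: l') n := by
  induction n with
  | zero => simp
  | succ n ih => rw [completeHomog_cons_succ, completeHomog_cons_succ, h, ih]

theorem List.Perm.completeHomog_eq {l l' : List ℝ} (h : l.Perm l') (n : ℕ) :
    completeHomog l n = completeHomog l' n := by
  induction h generalizing n with
  | nil => rfl
  | cons a _ ih => exact completeHomog_cons_congr a ih n
  | swap a b l => exact completeHomog_swap b a l n
  | trans _ _ ih₁ ih₂ => exact (ih₁ n).trans (ih₂ n)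

theorem completeHomog_cons_le_cons {a b : ℝ} {l : List ℝ} (hb : 0 ≤ b) (hba : b ≤ a)
    (hl : ∀ c ∈ l, 0 ≤ c) (n : ℕ) :
    completeHomog (b :: l) n ≤ completeHomog (a :: l) n := by
  cases n with
  | zero => simp
  | succ n =>
    have hab : 0 ≤ completeHomog (a :: b :: l) n :=
      completeHomog_nonneg (by simpa [hb, hb.trans hba] using hl) n
    linarith [completeHomog_cons_sub_cons a b l n, mul_nonneg (sub_nonneg.2 hba) hab]

theorem one_sub_mul_one_sub_mul_completeHomog (a b A : ℝ) (n : ℕ) :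
    (1 - a) * (1 - b) * completeHomog [a, b, A, 1] n =
      completeHomog [1, A] (n + 2) - completeHomog [a, A] (n + 2) -
        (1 - a) * completeHomog [a, b, A] (n + 1) := by
  have h₁ := completeHomog_cons_sub_cons 1 b [a, A] n
  have h₂ := completeHomog_cons_sub_cons 1 a [A] (n + 1)
  rw [(by grind : [1, b, a, A].Perm [a, b, A, 1]).completeHomog_eq,
    (by grind : [b, a, A].Perm [a, b, A]).completeHomog_eq] at h₁
  linear_combination -(1 - a) * h₁ - h₂

theorem one_sub_mul_one_sub_mul_completeHomog_le {A u v u' w : ℝ} (hA : 0 ≤ A) (hu' : 0 ≤ u')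
    (hu'u : u' ≤ u) (huw : u ≤ w) (hw : w ≤ 1) (hu'v : u' ≤ v) (hsum : u + v = u' + w) (n : ℕ) :
    (1 - u') * (1 - w) * completeHomog [u', w, A, 1] n ≤
      (1 - u) * (1 - v) * completeHomog [u, v, A, 1] n := by
  have hw_u_A := completeHomog_cons_sub_cons w u [A] (n + 1)
  have hw_v := completeHomog_cons_sub_cons w v [u, A] n
  have hu'_u := completeHomog_cons_sub_cons u' u [w, A] n
  rw [(by grind : [v, u, A].Perm [u, v, A]).completeHomog_eq,
    (by grind : [w, v, u, A].Perm [v, u, w, A]).completeHomog_eq] at hw_v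
  rw [(by grind : [u, w, A].Perm [w, u, A]).completeHomog_eq] at hu'_u
  have hF' := one_sub_mul_one_sub_mul_completeHomog w u' A n
  rw [(by grind : [w, u', A, 1].Perm [u', w, A, 1]).completeHomog_eq,
    (by grind : [w, u', A].Perm [u', w, A]).completeHomog_eq] at hF'
  have key : (1 - u) * (1 - v) * completeHomog [u, v, A, 1] n -
      (1 - u') * (1 - w) * completeHomog [u', w, A, 1] n =
      (u - u') * ((w - u) * completeHomog [v, u, w, A] n +
        (1 - w) * (completeHomog [v, u, w, A] n - completeHomog [u', u, w, A] n)) := by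
    linear_combination one_sub_mul_one_sub_mul_completeHomog u v A n -
      hF' + hw_u_A + (1 - u) * hw_v + (1 - w) * hu'_u +
      (u - 1) * completeHomog [v, u, w, A] n * hsum
  have hu : 0 ≤ u := hu'.trans hu'u
  have hw₀ : 0 ≤ w := hu.trans huw
  have hX : 0 ≤ completeHomog [v, u, w, A] n :=
    completeHomog_nonneg (by simp [hu'.trans hu'v, hu, hw₀, hA]) n
  have hXY : completeHomog [u', u, w, A] n ≤ completeHomog [v, u, w, A] n :=
    completeHomog_cons_le_cons hu' hu'v (by simp [hu, hw₀, hA]) n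
  rw [← sub_nonneg, key]
  exact mul_nonneg (by linarith)
    (add_nonneg (mul_nonneg (by linarith) hX) (mul_nonneg (by linarith) (by linarith)))

section SubseqWeight

variable {α : Type*} [Fintype α]

theorem sum_fin_succ_pi {M : Type*} [AddCommMonoid M] (n : ℕ) (f : (Fin (n + 1) → α) → M) :
    ∑ w, f w = ∑ c, ∑ w : Fin n → α, f (Fin.cons c w) := by
  rw [← (Fin.consEquiv fun _ ↦ α).sum_comp, Fintype.sum_prod_type]
  rfl

variable [DecidableEq α]

noncomputable def subseqWeight (p : α → ℝ) (s : List α) (n : ℕ) : ℝ :=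
  ∑ w : Fin n → α, if s.Sublist (List.ofFn w) then ∏ i, p (w i) else 0

theorem subseqWeight_nil (p : α → ℝ) (n : ℕ) : subseqWeight p [] n = (∑ a, p a) ^ n := by
  simp [subseqWeight, ← Fintype.prod_sum]

theorem subseqWeight_of_lt_length (p : α → ℝ) {s : List α} {n : ℕ} (hn : n < s.length) :
    subseqWeight p s n = 0 := by
  refine Finset.sum_eq_zero fun w _ ↦ if_neg fun hs ↦ ?_
  simpa using hn.trans_le hs.length_le

theorem subseqWeight_cons_succ (p : α → ℝ) (a : α) (s : List α) (n : ℕ) :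
    subseqWeight p (a :: s) (n + 1) =
      p a * subseqWeight p s n + (∑ c, p c - p a) * subseqWeight p (a :: s) n := by
  have hfirst : ∀ c, ∑ w : Fin n → α,
      (if (a :: s).Sublist (c :: List.ofFn w) then p c * ∏ i, p (w i) else 0) =
        p c * if c = a then subseqWeight p s n else subseqWeight p (a :: s) n := by
    intro c
    split_ifs with hc
    · subst hc
      simp only [List.cons_sublist_cons, subseqWeight, Finset.mul_sum, mul_ite, mul_zero]
    · simp only [List.cons_sublist_cons', Ne.symm hc, false_and, or_false,
        subseqWeight, Finset.mul_sum, mul_ite, mul_zero]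
  calc subseqWeight p (a :: s) (n + 1)
      = ∑ c, p c * if c = a then subseqWeight p s n else subseqWeight p (a :: s) n := by
        simp only [subseqWeight, sum_fin_succ_pi n, List.ofFn_succ, Fin.cons_zero, Fin.cons_succ,
          Fin.prod_univ_succ, hfirst]
    _ = ∑ c, (p c * subseqWeight p (a :: s) n +
          if c = a then p c * (subseqWeight p s n - subseqWeight p (a :: s) n) else 0) := by
        congr! 1 with c; split_ifs <;> ring
    _ = _ := by
        rw [Finset.sum_add_distrib, ← Finset.sum_mul, Finset.sum_ite_eq']
        simp only [Finset.mem_univ, if_true]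
        ring

theorem subseqWeight_add_length {p : α → ℝ} (hp : ∑ a, p a = 1) (s : List α) (n : ℕ) :
    subseqWeight p s (n + s.length) =
      (s.map p).prod * completeHomog (s.map (fun a ↦ 1 - p a) ++ [1]) n := by
  induction s generalizing n with
  | nil => simp [subseqWeight_nil, hp, completeHomog_singleton]
  | cons a s ih =>
    induction n with
    | zero =>
      rw [List.length_cons, zero_add, subseqWeight_cons_succ, ← zero_add s.length, ih,
        subseqWeight_of_lt_length p (by simp)]
      simp
    | succ n ihn =>
      rw [List.length_cons, ← add_assoc] at ihn ⊢
      rw [subseqWeight_cons_succ, ih, hp, add_right_comm, ihn]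
      simp only [List.map_cons, List.prod_cons, List.cons_append, completeHomog_cons_succ]
      ring

end SubseqWeight

theorem sublist_ofFn_triple_iff {α : Type*} {n : ℕ} (a b c : α) (w : Fin n → α) :
    [a, b, c].Sublist (List.ofFn w) ↔
      ∃ i j k : Fin n, i < j ∧ j < k ∧ w i = a ∧ w j = b ∧ w k = c := by
  have hlen : (List.ofFn w).length = n := List.length_ofFn
  rw [List.sublist_iff_exists_fin_orderEmbedding_get_eq]
  constructor
  · rintro ⟨f, hf⟩
    refine ⟨Fin.cast hlen (f 0), Fin.cast hlen (f 1), Fin.cast hlen (f 2),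
      f.strictMono (by decide : (0 : Fin 3) < 1), f.strictMono (by decide : (1 : Fin 3) < 2),
      by simpa [Fin.cast] using (hf 0).symm, by simpa [Fin.cast] using (hf 1).symm,
      by simpa [Fin.cast] using (hf 2).symm⟩
  · rintro ⟨i, j, k, hij, hjk, hi, hj, hk⟩
    have hmono : StrictMono ![i, j, k] := Fin.strictMono_iff_lt_succ.mpr fun m ↦ by
      fin_cases m <;> simpa
    refine ⟨(OrderEmbedding.ofStrictMono _ hmono).trans (Fin.castOrderIso hlen.symm).toOrderEmbedding,
      fun m ↦ ?_⟩
    fin_cases m <;> simp [hi, hj, hk]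

theorem subseqProb_eq_subseqWeight (N : ℕ) (x y : ℝ) :
    subseqProb N x y = subseqWeight ![1 - x - y, x, y] [2, 1, 0] N :=
  Finset.sum_congr rfl fun w _ ↦ if_congr (sublist_ofFn_triple_iff 2 1 0 w).symm rfl rfl

theorem subseqProb_of_lt_three {N : ℕ} (hN : N < 3) (x y : ℝ) : subseqProb N x y = 0 := by
  rw [subseqProb_eq_subseqWeight, subseqWeight_of_lt_length _ hN]

theorem subseqProb_add_three (n : ℕ) (x y : ℝ) :
    subseqProb (n + 3) x y =
      x * ((1 - (x + y)) * (1 - (1 - y)) * completeHomog [x + y, 1 - y, 1 - x, 1] n) := by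
  rw [subseqProb_eq_subseqWeight, show n + 3 = n + [(2 : Fin 3), 1, 0].length from rfl,
    subseqWeight_add_length (by
      simp only [Fin.sum_univ_three, Matrix.cons_val_zero, Matrix.cons_val_one,
        Matrix.cons_val_two, Matrix.head_cons, Matrix.tail_cons]
      ring) [2, 1, 0] n,
    ← (by grind : [1 - y, 1 - x, x + y, 1].Perm [x + y, 1 - y, 1 - x, 1]).completeHomog_eq]
  simp only [List.map_cons, List.map_nil, List.prod_cons, List.prod_nil, List.cons_append,
    List.nil_append, Matrix.cons_val, Matrix.cons_val_one, Matrix.cons_val_zero, mul_one]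
  rw [show 1 - (1 - x - y) = x + y by ring]
  ring

theorem subseqProb_comm (N : ℕ) (x y : ℝ) : subseqProb N x y = subseqProb N y x := by
  obtain hN | ⟨n, rfl⟩ := (lt_or_ge N 3).imp_right Nat.exists_eq_add_of_le'
  · rw [subseqProb_of_lt_three hN, subseqProb_of_lt_three hN]
  rw [subseqProb_add_three, subseqProb_add_three, add_comm y x,
    (by grind : [x + y, 1 - x, 1 - y, 1].Perm [x + y, 1 - y, 1 - x, 1]).completeHomog_eq]
  ring

theorem subseqProb_le_subseqProb_of_le {x t y : ℝ} (hx : 0 ≤ x) (ht : 0 ≤ t) (hty : t ≤ y)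
    (hsum : x + y + t ≤ 1) (N : ℕ) : subseqProb N x t ≤ subseqProb N x y := by
  obtain hN | ⟨n, rfl⟩ := (lt_or_ge N 3).imp_right Nat.exists_eq_add_of_le'
  · rw [subseqProb_of_lt_three hN, subseqProb_of_lt_three hN]
  rw [subseqProb_add_three, subseqProb_add_three]
  exact mul_le_mul_of_nonneg_left (one_sub_mul_one_sub_mul_completeHomog_le (by linarith)
    (by linarith) (by linarith) (by linarith) (by linarith) (by linarith) (by ring) n) hx

theorem stmt4_general (N : ℕ) (t x y : ℝ) (ht0 : 0 ≤ t) (ht1 : t ≤ 1 / 3)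
    (hty : t ≤ y) (hyx : y ≤ x) (hx : x ≤ (1 - y) / 2) :
    subseqProb N t t ≤ subseqProb N x y :=
  calc subseqProb N t t ≤ subseqProb N t x :=
        subseqProb_le_subseqProb_of_le ht0 ht0 (hty.trans hyx) (by linarith) N
    _ = subseqProb N x t := subseqProb_comm N t x
    _ ≤ subseqProb N x y := subseqProb_le_subseqProb_of_le (by linarith) ht0 hty (by linarith) N

/-- Among all admissible letter probabilities `(1-x-y, x, y)` with `t ≤ y ≤ x ≤ (1-y)/2`,
the probability of containing `c, b, a` as a subsequence is minimized at `x = y = t`. -/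
theorem stmt4 (N : ℕ) (hN : 0 < N) (t x y : ℝ) (ht0 : 0 ≤ t) (ht1 : t ≤ 1 / 3)
    (hty : t ≤ y) (hyx : y ≤ x) (hx : x ≤ (1 - y) / 2) :
    subseqProb N t t ≤ subseqProb N x y :=
  stmt4_general N t x y ht0 ht1 hty hyx hx
end

section
/- Let N, j, i be natural numbers with 2j ≤ N. Consider semistandard Young tableaux of shape (N − j, j) with entries in the three-letter totally ordered alphabet {0, 1, 2} (rows weakly increasing left to right, columns strictly increasing top to bottom). If i ≤ j, then the number of such tableaux having exactly i entries equal to 0 is (i + 1)(N − 2j + 1). If j < i ≤ N − j, then the number of such tableaux having exactly i entries equal to 0 is (j + 1)(N − i − j + 1). -/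
/-!
Every `0` of a semistandard tableau lies in its first row, and a row over `{0, 1, 2}` is
determined by how many of its entries are `≤ 0` and `≤ 1`. So a tableau of shape `(N - j, j)`
over `{0, 1, 2}` with `i` zeros is determined by the number `q` of entries `≤ 1` in the first row
and the number `s` of ones in the second row. Column strictness amounts to `s ≤ i` and `j ≤ q`,
so `(q, s)` ranges exactly over `[max i j, N - j] × [0, min i j]`.
-/

/-- The two-row Young diagram of shape `(N - j, j)` (one row if `j = 0`). -/
def twoRowDiagram (N j : ℕ) (h : 2 * j ≤ N) : YoungDiagram :=
  YoungDiagram.ofRowLens [N - j, j] (by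
    simp [List.sortedGE_iff_pairwise]
    omega)

open Finset

namespace SemistandardYoungTableau

variable {μ : YoungDiagram} (T : SemistandardYoungTableau μ)

def rowCountLE (r c : ℕ) : ℕ := #{k ∈ range (μ.rowLen r) | T r k ≤ c}

theorem le_iff_lt_rowCountLE {r k : ℕ} (c : ℕ) (hk : k < μ.rowLen r) :
    T r k ≤ c ↔ k < T.rowCountLE r c := by
  have mem_of_le : ∀ {k₁ k₂}, k₁ ≤ k₂ → k₂ < μ.rowLen r → T r k₂ ≤ c →
      k₁ ∈ ({k ∈ range (μ.rowLen r) | T r k ≤ c} : Finset ℕ) := fun h₁₂ h₂ hc =>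
    mem_filter.2 ⟨mem_range.2 (h₁₂.trans_lt h₂),
      (T.row_weak_of_le h₁₂ (μ.mem_iff_lt_rowLen.2 h₂)).trans hc⟩
  constructor
  · intro hc
    have hsub : range (k + 1) ⊆ {k ∈ range (μ.rowLen r) | T r k ≤ c} := fun k' hk' =>
      mem_of_le (Nat.lt_succ_iff.1 (mem_range.1 hk')) hk hc
    simpa [rowCountLE] using card_le_card hsub
  · intro hlt
    by_contra hc
    have hsub : {k ∈ range (μ.rowLen r) | T r k ≤ c} ⊆ range k := fun k' hk' => by
      obtain ⟨hk'len, hk'c⟩ := mem_filter.1 hk'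
      exact mem_range.2 (lt_of_not_ge fun hkk' =>
        hc (mem_filter.1 (mem_of_le hkk' (mem_range.1 hk'len) hk'c)).2)
    exact absurd hlt (not_lt.2 ((card_le_card hsub).trans_eq (card_range k)))

theorem rowCountLE_le_rowLen (r c : ℕ) : T.rowCountLE r c ≤ μ.rowLen r :=
  (card_filter_le _ _).trans (card_range _).le

theorem rowCountLE_eq_rowLen {r c : ℕ} (h : ∀ k < μ.rowLen r, T r k ≤ c) :
    T.rowCountLE r c = μ.rowLen r := by
  rw [rowCountLE, filter_true_of_mem fun k hk => h k (mem_range.1 hk), card_range]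

theorem rowCountLE_le_rowCountLE {r r' c c' : ℕ}
    (h : ∀ k < μ.rowLen r, T r k ≤ c → k < μ.rowLen r' ∧ T r' k ≤ c') :
    T.rowCountLE r c ≤ T.rowCountLE r' c' :=
  card_le_card fun k hk => by
    obtain ⟨hk, hc⟩ := mem_filter.1 hk
    obtain ⟨hk', hc'⟩ := h k (mem_range.1 hk) hc
    exact mem_filter.2 ⟨mem_range.2 hk', hc'⟩

theorem rowCountLE_mono (r : ℕ) {c c' : ℕ} (hc : c ≤ c') :
    T.rowCountLE r c ≤ T.rowCountLE r c' :=
  T.rowCountLE_le_rowCountLE fun _ hk hkc => ⟨hk, hkc.trans hc⟩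

theorem rowCountLE_succ_le_of_lt {r r' : ℕ} (hr : r < r') (c : ℕ) :
    T.rowCountLE r' (c + 1) ≤ T.rowCountLE r c :=
  T.rowCountLE_le_rowCountLE fun _ hk hkc =>
    ⟨hk.trans_le (μ.rowLen_anti r r' hr.le),
      Nat.le_of_lt_succ ((T.col_strict hr (μ.mem_iff_lt_rowLen.2 hk)).trans_le hkc)⟩

theorem rowCountLE_zero_eq_zero {r : ℕ} (hr : 0 < r) : T.rowCountLE r 0 = 0 :=
  card_eq_zero.2 <| filter_eq_empty_iff.2 fun _ hk =>
    not_le.2 ((Nat.zero_le _).trans_lt (T.col_strict hr (μ.mem_iff_lt_rowLen.2 (mem_range.1 hk))))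

theorem card_cells_filter_eq_zero :
    #{c ∈ μ.cells | T c.1 c.2 = 0} = T.rowCountLE 0 0 := by
  symm
  apply card_nbij (fun k => (0, k))
  · intro k hk
    obtain ⟨hk, h0⟩ := mem_filter.1 hk
    exact mem_filter.2 ⟨(YoungDiagram.mem_cells _).2 (μ.mem_iff_lt_rowLen.2 (mem_range.1 hk)),
      Nat.le_zero.1 h0⟩
  · intro k _ k' _ h
    exact (Prod.ext_iff.1 h).2
  · rintro ⟨r, k⟩ hc
    obtain ⟨hmem, h0⟩ := mem_filter.1 (mem_coe.1 hc)
    obtain rfl : r = 0 := by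
      by_contra hr
      exact Nat.not_lt_zero _ (h0 ▸ T.col_strict (Nat.pos_of_ne_zero hr) hmem)
    exact ⟨k, mem_filter.2 ⟨mem_range.2 (μ.mem_iff_lt_rowLen.1 hmem), h0.le⟩, rfl⟩

theorem ext_of_rowCountLE {m : ℕ} {T T' : SemistandardYoungTableau μ}
    (hT : ∀ r k, T r k ≤ m) (hT' : ∀ r k, T' r k ≤ m)
    (h : ∀ r c, c < m → T.rowCountLE r c = T'.rowCountLE r c) : T = T' := by
  ext r k
  by_cases hk : k < μ.rowLen r
  · have key : ∀ c < m, T r k ≤ c ↔ T' r k ≤ c := fun c hc => by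
      rw [T.le_iff_lt_rowCountLE c hk, T'.le_iff_lt_rowCountLE c hk, h r c hc]
    by_contra hne
    rcases Nat.lt_or_gt_of_ne hne with hlt | hlt
    · exact absurd ((key _ (hlt.trans_le (hT' r k))).1 le_rfl) (not_le.2 hlt)
    · exact absurd ((key _ (hlt.trans_le (hT r k))).2 le_rfl) (not_le.2 hlt)
  · rw [T.zeros (mt μ.mem_iff_lt_rowLen.1 hk), T'.zeros (mt μ.mem_iff_lt_rowLen.1 hk)]

end SemistandardYoungTableau

section TwoRow

variable {N j : ℕ} (h : 2 * j ≤ N)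

theorem mem_twoRowDiagram {r k : ℕ} :
    (r, k) ∈ twoRowDiagram N j h ↔ r = 0 ∧ k < N - j ∨ r = 1 ∧ k < j := by
  rw [twoRowDiagram, YoungDiagram.mem_ofRowLens]
  match r with
  | 0 => simp
  | 1 => simp
  | r + 2 => simp

theorem rowLen_twoRowDiagram_zero : (twoRowDiagram N j h).rowLen 0 = N - j :=
  eq_of_forall_lt_iff fun k => by rw [← YoungDiagram.mem_iff_lt_rowLen, mem_twoRowDiagram]; simp

theorem rowLen_twoRowDiagram_one : (twoRowDiagram N j h).rowLen 1 = j :=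
  eq_of_forall_lt_iff fun k => by rw [← YoungDiagram.mem_iff_lt_rowLen, mem_twoRowDiagram]; simp

theorem rowLen_twoRowDiagram_of_two_le {r : ℕ} (hr : 2 ≤ r) :
    (twoRowDiagram N j h).rowLen r = 0 :=
  eq_of_forall_lt_iff fun k => by
    rw [← YoungDiagram.mem_iff_lt_rowLen, mem_twoRowDiagram]; omega

def stepRow (p q k : ℕ) : ℕ := if k < p then 0 else if k < q then 1 else 2

theorem stepRow_le_two (p q k : ℕ) : stepRow p q k ≤ 2 := by
  unfold stepRow; split_ifs <;> omega

theorem card_stepRow_le_zero {p q n : ℕ} (hp : p ≤ n) :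
    #{k ∈ range n | stepRow p q k ≤ 0} = p := by
  convert card_range p using 2
  ext k; rw [mem_filter, mem_range, mem_range]; unfold stepRow; split_ifs <;> omega

theorem card_stepRow_le_one {p q n : ℕ} (hpq : p ≤ q) (hq : q ≤ n) :
    #{k ∈ range n | stepRow p q k ≤ 1} = q := by
  convert card_range q using 2
  ext k; rw [mem_filter, mem_range, mem_range]; unfold stepRow; split_ifs <;> omega

def twoRowTableau (p q s : ℕ) (hjq : j ≤ q) (hsp : s ≤ p) :
    SemistandardYoungTableau (twoRowDiagram N j h) where
  entry r k := if (r, k) ∈ twoRowDiagram N j h then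
    if r = 0 then stepRow p q k else stepRow 0 s k else 0
  row_weak' := by
    intro r k₁ k₂ hk hcell
    have hcell₁ : (r, k₁) ∈ twoRowDiagram N j h :=
      (twoRowDiagram N j h).isLowerSet (Prod.mk_le_mk.2 ⟨le_rfl, hk.le⟩) hcell
    simp only [hcell, hcell₁, if_true, stepRow]
    split_ifs <;> omega
  col_strict' := by
    intro r₁ r₂ k hr hcell
    have hcell₁ : (r₁, k) ∈ twoRowDiagram N j h :=
      (twoRowDiagram N j h).isLowerSet (Prod.mk_le_mk.2 ⟨hr.le, le_rfl⟩) hcell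
    have hr₂ := (mem_twoRowDiagram h).1 hcell
    simp only [hcell, hcell₁, if_true, stepRow]
    split_ifs <;> omega
  zeros' := by
    intro r k hcell
    simp only [hcell, if_false]

section TwoRowTableau

variable {p q s : ℕ} (hjq : j ≤ q) (hsp : s ≤ p)

theorem twoRowTableau_le_two (r k : ℕ) : twoRowTableau h p q s hjq hsp r k ≤ 2 := by
  change ite _ (ite _ _ _) 0 ≤ 2
  split_ifs <;> simp [stepRow_le_two]

theorem rowCountLE_twoRowTableau_zero (c : ℕ) :
    (twoRowTableau h p q s hjq hsp).rowCountLE 0 c =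
      #{k ∈ range (N - j) | stepRow p q k ≤ c} := by
  rw [SemistandardYoungTableau.rowCountLE, rowLen_twoRowDiagram_zero]
  refine congrArg card (filter_congr fun k hk => ?_)
  have hcell : (0, k) ∈ twoRowDiagram N j h :=
    (mem_twoRowDiagram h).2 (Or.inl ⟨rfl, mem_range.1 hk⟩)
  change ite _ (ite _ _ _) 0 ≤ c ↔ _
  rw [if_pos hcell, if_pos rfl]

theorem rowCountLE_twoRowTableau_one (c : ℕ) :
    (twoRowTableau h p q s hjq hsp).rowCountLE 1 c = #{k ∈ range j | stepRow 0 s k ≤ c} := by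
  rw [SemistandardYoungTableau.rowCountLE, rowLen_twoRowDiagram_one]
  refine congrArg card (filter_congr fun k hk => ?_)
  have hcell : (1, k) ∈ twoRowDiagram N j h :=
    (mem_twoRowDiagram h).2 (Or.inr ⟨rfl, mem_range.1 hk⟩)
  change ite _ (ite _ _ _) 0 ≤ c ↔ _
  rw [if_pos hcell, if_neg one_ne_zero]

end TwoRowTableau

theorem eq_of_rowCountLE_eq {T T' : SemistandardYoungTableau (twoRowDiagram N j h)}
    (hT : ∀ r k, T r k ≤ 2) (hT' : ∀ r k, T' r k ≤ 2)
    (h00 : T.rowCountLE 0 0 = T'.rowCountLE 0 0) (h01 : T.rowCountLE 0 1 = T'.rowCountLE 0 1)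
    (h11 : T.rowCountLE 1 1 = T'.rowCountLE 1 1) : T = T' := by
  refine SemistandardYoungTableau.ext_of_rowCountLE hT hT' fun r c hc => ?_
  match r, c, hc with
  | 0, 0, _ => exact h00
  | 0, 1, _ => exact h01
  | 1, 0, _ => rw [T.rowCountLE_zero_eq_zero one_pos, T'.rowCountLE_zero_eq_zero one_pos]
  | 1, 1, _ => exact h11
  | r + 2, c, _ =>
    have hlen := rowLen_twoRowDiagram_of_two_le h (Nat.le_add_left 2 r)
    have := T.rowCountLE_le_rowLen (r + 2) c
    have := T'.rowCountLE_le_rowLen (r + 2) c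
    omega

theorem rowCountLE_one_mem_Icc_prod_Iic (T : SemistandardYoungTableau (twoRowDiagram N j h))
    (hT : ∀ r k, T r k ≤ 2) :
    (T.rowCountLE 0 1, T.rowCountLE 1 1) ∈
      Icc (max (T.rowCountLE 0 0) j) (N - j) ×ˢ Iic (min (T.rowCountLE 0 0) j) := by
  have hj : j ≤ T.rowCountLE 0 1 :=
    calc j = T.rowCountLE 1 2 :=
          (rowLen_twoRowDiagram_one h).symm.trans (T.rowCountLE_eq_rowLen fun k _ => hT 1 k).symm
      _ ≤ T.rowCountLE 0 1 := T.rowCountLE_succ_le_of_lt one_pos 1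
  simp only [mem_product, mem_Icc, mem_Iic, max_le_iff, le_min_iff]
  refine ⟨⟨⟨T.rowCountLE_mono 0 zero_le_one, hj⟩, ?_⟩,
    T.rowCountLE_succ_le_of_lt one_pos 0, ?_⟩
  · exact (T.rowCountLE_le_rowLen 0 1).trans_eq (rowLen_twoRowDiagram_zero h)
  · exact (T.rowCountLE_le_rowLen 1 1).trans_eq (rowLen_twoRowDiagram_one h)

def ternaryTableauEquiv (i : ℕ) :
    {T : SemistandardYoungTableau (twoRowDiagram N j h) //
        (∀ a b : ℕ, T a b ≤ 2) ∧
        ((twoRowDiagram N j h).cells.filter (fun c => T c.1 c.2 = 0)).card = i} ≃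
      (Icc (max i j) (N - j) ×ˢ Iic (min i j) : Finset (ℕ × ℕ)) where
  toFun T := ⟨(T.1.rowCountLE 0 1, T.1.rowCountLE 1 1), by
    simpa only [← T.1.card_cells_filter_eq_zero, T.2.2] using
      rowCountLE_one_mem_Icc_prod_Iic h T.1 T.2.1⟩
  invFun x :=
    have hq := mem_Icc.1 (mem_product.1 x.2).1
    have hs := mem_Iic.1 (mem_product.1 x.2).2
    ⟨twoRowTableau h i x.1.1 x.1.2 ((le_max_right _ _).trans hq.1) (hs.trans (min_le_left _ _)),
      twoRowTableau_le_two h _ _, by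
        rw [SemistandardYoungTableau.card_cells_filter_eq_zero, rowCountLE_twoRowTableau_zero,
          card_stepRow_le_zero ((le_max_left _ _).trans (hq.1.trans hq.2))]⟩
  left_inv T := by
    obtain ⟨T, hT, hzeros⟩ := T
    rw [SemistandardYoungTableau.card_cells_filter_eq_zero] at hzeros
    have hmem := rowCountLE_one_mem_Icc_prod_Iic h T hT
    simp only [hzeros, mem_product, mem_Icc, mem_Iic, max_le_iff, le_min_iff] at hmem
    apply Subtype.ext
    dsimp only
    refine eq_of_rowCountLE_eq h (twoRowTableau_le_two h _ _) hT ?_ ?_ ?_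
    · rw [rowCountLE_twoRowTableau_zero, card_stepRow_le_zero (by omega), hzeros]
    · rw [rowCountLE_twoRowTableau_zero, card_stepRow_le_one (by omega) (by omega)]
    · rw [rowCountLE_twoRowTableau_one, card_stepRow_le_one (Nat.zero_le _) (by omega)]
  right_inv x := by
    obtain ⟨⟨q, s⟩, hx⟩ := x
    simp only [mem_product, mem_Icc, mem_Iic, max_le_iff, le_min_iff] at hx
    refine Subtype.ext (Prod.ext ?_ ?_) <;> dsimp only
    · exact (rowCountLE_twoRowTableau_zero h _ _ 1).trans
        (card_stepRow_le_one (by omega) (by omega))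
    · exact (rowCountLE_twoRowTableau_one h _ _ 1).trans
        (card_stepRow_le_one (Nat.zero_le _) (by omega))

theorem card_ternaryTableaux_twoRowDiagram (i : ℕ) :
    Nat.card {T : SemistandardYoungTableau (twoRowDiagram N j h) //
        (∀ a b : ℕ, T a b ≤ 2) ∧
        ((twoRowDiagram N j h).cells.filter (fun c => T c.1 c.2 = 0)).card = i} =
      (N - j + 1 - max i j) * (min i j + 1) := by
  rw [Nat.card_congr (ternaryTableauEquiv h i), Nat.card_eq_finsetCard, card_product,
    Nat.card_Icc, Nat.card_Iic]

end TwoRow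

/-- Counting semistandard Young tableaux of shape `(N - j, j)` over the three-letter ordered
alphabet `{0, 1, 2}` by the number `i` of entries equal to `0`: if `i ≤ j` there are
`(i+1)(N-2j+1)` such tableaux, and if `j < i ≤ N - j` there are `(j+1)(N-i-j+1)` of them. -/
theorem stmt5 (N j i : ℕ) (h2j : 2 * j ≤ N) :
    (i ≤ j →
      Nat.card {T : SemistandardYoungTableau (twoRowDiagram N j h2j) //
          (∀ a b : ℕ, T a b ≤ 2) ∧
          ((twoRowDiagram N j h2j).cells.filter (fun c => T c.1 c.2 = 0)).card = i} =
        (i + 1) * (N - 2 * j + 1)) ∧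
    (j < i → i ≤ N - j →
      Nat.card {T : SemistandardYoungTableau (twoRowDiagram N j h2j) //
          (∀ a b : ℕ, T a b ≤ 2) ∧
          ((twoRowDiagram N j h2j).cells.filter (fun c => T c.1 c.2 = 0)).card = i} =
        (j + 1) * (N - i - j + 1)) := by
  rw [card_ternaryTableaux_twoRowDiagram]
  refine ⟨fun hij => ?_, fun hji _ => ?_⟩
  · rw [max_eq_right hij, min_eq_left hij, mul_comm]
    congr 1
    omega
  · rw [max_eq_left hji.le, min_eq_right hji.le, mul_comm]
    congr 1
    omega
end

section
/- Let d and r be positive integers with r < d, let ε > 0, and let p ∈ ℝ^d satisfy p₁ ≥ p₂ ≥ ⋯ ≥ p_d ≥ 0, Σ_{j=1}^d p_j = 1, and Σ_{j=r+1}^d p_j ≥ ε. Then there exists a real q with ε/(d−r) ≤ q ≤ (1−ε)/r such that, setting k := ⌊ε/q⌋, the vector p is majorized by the d-dimensional vector v whose first entry is 1 − ε − (r−1)q, whose next k + r − 1 entries equal q, whose next entry (when within range) is ε − qk, and whose remaining entries are 0. -/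
/-!
Take `q := p_{r+1}`, the largest entry of the tail. Monotonicity of `p` gives
`ε ≤ (d - r) q` and `r q ≤ 1 - ε`, which are the two bounds on `q`. The prefix sums of `v` are
`min 1 (1 - ε + (m - r) q)`. Since `p` is nonincreasing, its `m` largest entries are its first
`m`, and their sum is at most `1` (the entries are nonnegative) and at most
`1 - ε + (m - r) q`, because the first `r` entries sum to at most `1 - ε` and every entry between
positions `r` and `m` is compared with `q`.
-/

/-- The sum of the `m` largest entries of a vector `u ∈ ℝ^d` (as a supremum over all
subsets of `m` coordinates). -/
noncomputable def sumLargest {d : ℕ} (u : Fin d → ℝ) (m : ℕ) : ℝ :=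
  sSup {x : ℝ | ∃ s : Finset (Fin d), s.card = m ∧ x = ∑ j ∈ s, u j}

open Finset

theorem Antitone.sum_le_sum_range_card {M : Type*} [AddCommMonoid M] [PartialOrder M]
    [IsOrderedAddMonoid M] {f : ℕ → M} (hf : Antitone f) (s : Finset ℕ) :
    ∑ n ∈ s, f n ≤ ∑ n ∈ range #s, f n := by
  induction s using Finset.induction_on_max with
  | empty => simp
  | insert a s hlt ih =>
    have ha : a ∉ s := fun h => lt_irrefl a (hlt a h)
    have hcard : #s ≤ a := by
      simpa using card_le_card (fun x hx => mem_range.2 (hlt x hx) : s ⊆ range a)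
    rw [sum_insert ha, card_insert_of_notMem ha, sum_range_succ, add_comm]
    exact add_le_add ih (hf hcard)

theorem Antitone.sum_range_sub_sum_range_le {f : ℕ → ℝ} (hf : Antitone f) (m r : ℕ) :
    ∑ n ∈ range m, f n - ∑ n ∈ range r, f n ≤ ((m : ℝ) - r) * f r := by
  rcases le_total m r with h | h
  · have hIco := card_nsmul_le_sum (Ico m r) f (f r) fun n hn => hf (mem_Ico.1 hn).2.le
    rw [← sum_range_add_sum_Ico f h]
    simp only [Nat.card_Ico, nsmul_eq_mul, Nat.cast_sub h] at hIco
    linarith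
  · have hIco := sum_le_card_nsmul (Ico r m) f (f r) fun n hn => hf (mem_Ico.1 hn).1
    rw [← sum_range_add_sum_Ico f h]
    simp only [Nat.card_Ico, nsmul_eq_mul, Nat.cast_sub h] at hIco
    linarith

theorem Antitone.sum_range_le_of_le_sum_Ico {f : ℕ → ℝ} {d r : ℕ} {ε : ℝ} (hf : Antitone f)
    (hrd : r ≤ d) (htail : ε ≤ ∑ n ∈ Ico r d, f n) (m : ℕ) :
    ∑ n ∈ range m, f n ≤ ∑ n ∈ range d, f n - ε + ((m : ℝ) - r) * f r := by
  linarith [hf.sum_range_sub_sum_range_le m r, sum_range_add_sum_Ico f hrd]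

section sumLargest

variable {d m : ℕ}

theorem sumLargest_of_lt (u : Fin d → ℝ) (h : d < m) : sumLargest u m = 0 := by
  have hempty : {x : ℝ | ∃ s : Finset (Fin d), #s = m ∧ x = ∑ j ∈ s, u j} = ∅ := by
    refine Set.eq_empty_of_forall_notMem fun x ⟨s, hs, _⟩ => ?_
    have := card_le_univ s
    simp only [Fintype.card_fin] at this
    omega
  rw [sumLargest, hempty, Real.sSup_empty]

theorem sum_le_sumLargest (u : Fin d → ℝ) {s : Finset (Fin d)} (hs : #s = m) :
    ∑ j ∈ s, u j ≤ sumLargest u m := by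
  refine le_csSup (Set.Finite.bddAbove ?_) ⟨s, hs, rfl⟩
  refine (Set.finite_range fun t : Finset (Fin d) => ∑ j ∈ t, u j).subset ?_
  rintro _ ⟨t, -, rfl⟩
  exact ⟨t, rfl⟩

theorem sumLargest_le {u : Fin d → ℝ} {c : ℝ} (hm : m ≤ d)
    (h : ∀ s : Finset (Fin d), #s = m → ∑ j ∈ s, u j ≤ c) : sumLargest u m ≤ c := by
  obtain ⟨s, -, hs⟩ := exists_subset_card_eq (s := (univ : Finset (Fin d))) (by simpa using hm)
  refine csSup_le ⟨_, s, hs, rfl⟩ ?_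
  rintro _ ⟨t, ht, rfl⟩
  exact h t ht

theorem sum_range_le_sumLargest (f : ℕ → ℝ) (hm : m ≤ d) :
    ∑ n ∈ range m, f n ≤ sumLargest (fun j : Fin d => f j) m := by
  have := sum_le_sumLargest (fun j : Fin d => f j) (s := univ.map (Fin.castLEEmb hm)) (m := m)
    (by simp)
  simpa [Fin.sum_univ_eq_sum_range] using this

theorem Antitone.sumLargest_le_sum_range {f : ℕ → ℝ} (hf : Antitone f) (hm : m ≤ d) :
    sumLargest (fun j : Fin d => f j) m ≤ ∑ n ∈ range m, f n :=
  sumLargest_le hm fun s hs => by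
    simpa [hs] using hf.sum_le_sum_range_card (s.map Fin.valEmbedding)

theorem sumLargest_le_sumLargest_of_sum_range_le {f g : ℕ → ℝ} (hf : Antitone f)
    (h : ∀ m ≤ d, ∑ n ∈ range m, f n ≤ ∑ n ∈ range m, g n) (m : ℕ) :
    sumLargest (fun j : Fin d => f j) m ≤ sumLargest (fun j : Fin d => g j) m := by
  rcases le_or_gt m d with hm | hm
  · exact (hf.sumLargest_le_sum_range hm).trans ((h m hm).trans (sum_range_le_sumLargest g hm))
  · rw [sumLargest_of_lt _ hm, sumLargest_of_lt _ hm]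

end sumLargest

theorem sum_filter_le_val_eq_sum_Ico {d : ℕ} (f : ℕ → ℝ) (r : ℕ) :
    ∑ j ∈ univ.filter (fun j : Fin d => r ≤ (j : ℕ)), f j = ∑ n ∈ Ico r d, f n := by
  have hmap : (univ.filter (fun j : Fin d => r ≤ (j : ℕ))).map Fin.valEmbedding = Ico r d := by
    ext n
    simp only [mem_map, mem_filter, mem_univ, true_and, Fin.valEmbedding_apply, mem_Ico]
    exact ⟨by rintro ⟨j, hj, rfl⟩; exact ⟨hj, j.2⟩, fun hn => ⟨⟨n, hn.2⟩, hn.1, rfl⟩⟩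
  rw [← hmap, sum_map]
  rfl

section extendByZero

variable {d : ℕ}

noncomputable def extendByZero (p : Fin d → ℝ) (n : ℕ) : ℝ :=
  if h : n < d then p ⟨n, h⟩ else 0

theorem extendByZero_val (p : Fin d → ℝ) (j : Fin d) : extendByZero p j = p j :=
  dif_pos j.2

theorem extendByZero_nonneg {p : Fin d → ℝ} (hnn : ∀ j, 0 ≤ p j) (n : ℕ) :
    0 ≤ extendByZero p n := by
  unfold extendByZero
  split_ifs
  exacts [hnn _, le_rfl]

theorem antitone_extendByZero {p : Fin d → ℝ} (hp : Antitone p) (hnn : ∀ j, 0 ≤ p j) :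
    Antitone (extendByZero p) := by
  intro a b hab
  by_cases hb : b < d
  · simp only [extendByZero, dif_pos hb, dif_pos (hab.trans_lt hb)]
    exact hp (Fin.mk_le_mk.2 hab)
  · simp only [extendByZero, dif_neg hb]
    exact extendByZero_nonneg hnn a

end extendByZero

noncomputable def stepVector (ε q : ℝ) (r n : ℕ) : ℝ :=
  if n = 0 then 1 - ε - ((r : ℝ) - 1) * q
  else if n ≤ ⌊ε / q⌋₊ + r - 1 then q
  else if n = ⌊ε / q⌋₊ + r then ε - q * (⌊ε / q⌋₊ : ℝ)
  else 0

theorem sum_range_stepVector_of_le {ε q : ℝ} {r m : ℕ} (hm : 0 < m) (hmk : m ≤ ⌊ε / q⌋₊ + r) :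
    ∑ n ∈ range m, stepVector ε q r n = 1 - ε + ((m : ℝ) - r) * q := by
  obtain ⟨m, rfl⟩ := Nat.exists_eq_add_one_of_ne_zero hm.ne'
  have hconst : ∀ n ∈ range m, stepVector ε q r (n + 1) = q := fun n hn => by
    rw [stepVector, if_neg n.succ_ne_zero, if_pos (by have := mem_range.1 hn; omega)]
  rw [sum_range_succ', sum_congr rfl hconst, sum_const, card_range, nsmul_eq_mul, stepVector,
    if_pos rfl]
  push_cast
  ring

theorem sum_range_stepVector_of_lt {ε q : ℝ} {r m : ℕ} (hr : 0 < r) (hmk : ⌊ε / q⌋₊ + r < m) :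
    ∑ n ∈ range m, stepVector ε q r n = 1 := by
  set k := ⌊ε / q⌋₊
  have hzero : ∑ n ∈ Ico (k + r + 1) m, stepVector ε q r n = 0 :=
    sum_eq_zero fun n hn => by
      have := (mem_Ico.1 hn).1
      rw [stepVector, if_neg (by omega), if_neg (by omega), if_neg (by omega)]
  have hlast : stepVector ε q r (k + r) = ε - q * k := by
    rw [stepVector, if_neg (by omega), if_neg (by omega), if_pos rfl]
  rw [← sum_range_add_sum_Ico _ hmk, hzero, sum_range_succ,
    sum_range_stepVector_of_le (by omega) le_rfl, hlast]
  push_cast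
  ring

theorem sum_range_stepVector {ε q : ℝ} {r m : ℕ} (hε : 0 ≤ ε) (hq : 0 < q) (hr : 0 < r)
    (hm : 0 < m) :
    ∑ n ∈ range m, stepVector ε q r n = min 1 (1 - ε + ((m : ℝ) - r) * q) := by
  set k := ⌊ε / q⌋₊
  have hkq : (k : ℝ) * q ≤ ε := (le_div_iff₀ hq).1 (Nat.floor_le (div_nonneg hε hq.le))
  have hεk : ε < ((k : ℝ) + 1) * q := (div_lt_iff₀ hq).1 (Nat.lt_floor_add_one _)
  rcases le_or_gt m (k + r) with hmk | hmk
  · have : (m : ℝ) - r ≤ k := by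
      rw [sub_le_iff_le_add]
      exact_mod_cast hmk
    rw [sum_range_stepVector_of_le hm hmk, min_eq_right (by nlinarith)]
  · have : (k : ℝ) + 1 ≤ m - r := by
      rw [le_sub_iff_add_le]
      exact_mod_cast (show k + 1 + r ≤ m by omega)
    rw [sum_range_stepVector_of_lt hr hmk, min_eq_left (by nlinarith)]

/-- Majorization claim: every nonincreasing probability vector `p ∈ ℝ^d` with tail sum
`Σ_{j=r+1}^d p_j ≥ ε` is majorized by a vector of the form
`(1 - ε - (r-1)q, q, …, q, ε - qk, 0, …, 0)` where `q ∈ [ε/(d-r), (1-ε)/r]`, `k = ⌊ε/q⌋`,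
the entry `q` is repeated `k + r - 1` times, and the entry `ε - qk` appears when within range. -/
theorem stmt10 (d r : ℕ) (hr : 0 < r) (hrd : r < d) (ε : ℝ) (hε : 0 < ε)
    (p : Fin d → ℝ) (hmono : Antitone p) (hnn : ∀ j, 0 ≤ p j)
    (hsum : ∑ j, p j = 1)
    (htail : ε ≤ ∑ j ∈ Finset.univ.filter (fun j : Fin d => r ≤ (j : ℕ)), p j) :
    ∃ q : ℝ, ε / ((d : ℝ) - (r : ℝ)) ≤ q ∧ q ≤ (1 - ε) / (r : ℝ) ∧
      ∃ v : Fin d → ℝ,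
        (∀ j : Fin d, v j =
          if (j : ℕ) = 0 then 1 - ε - ((r : ℝ) - 1) * q
          else if (j : ℕ) ≤ ⌊ε / q⌋₊ + r - 1 then q
          else if (j : ℕ) = ⌊ε / q⌋₊ + r then ε - q * (⌊ε / q⌋₊ : ℝ)
          else 0) ∧
        (∑ j, v j = ∑ j, p j) ∧
        (∀ m : ℕ, sumLargest p m ≤ sumLargest v m) := by
  set P := extendByZero p
  have hP : Antitone P := antitone_extendByZero hmono hnn
  have hp : p = fun j : Fin d => P j := funext fun j => (extendByZero_val p j).symm
  have htotal : ∑ n ∈ range d, P n = 1 := by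
    rw [← Fin.sum_univ_eq_sum_range, ← hp, hsum]
  have hbound (m : ℕ) : ∑ n ∈ range m, P n ≤ 1 - ε + ((m : ℝ) - r) * P r := by
    rw [hp, sum_filter_le_val_eq_sum_Ico] at htail
    simpa only [htotal] using hP.sum_range_le_of_le_sum_Ico hrd.le htail m
  set q := P r
  have hdr : (0 : ℝ) < d - r := sub_pos.2 (by exact_mod_cast hrd)
  have hlow : ε / ((d : ℝ) - r) ≤ q := by
    rw [div_le_iff₀ hdr]
    linarith [hbound d]
  have hq : 0 < q := (div_pos hε hdr).trans_le hlow
  have hhigh : q ≤ (1 - ε) / r := by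
    rw [le_div_iff₀ (by exact_mod_cast hr)]
    simpa [mul_comm] using hbound 0
  have hprefix : ∀ m ≤ d, ∑ n ∈ range m, P n ≤ ∑ n ∈ range m, stepVector ε q r n := by
    intro m hm
    rcases Nat.eq_zero_or_pos m with rfl | hm0
    · simp
    rw [sum_range_stepVector hε.le hq hr hm0]
    refine le_min ?_ (hbound m)
    exact htotal ▸ sum_le_sum_of_subset_of_nonneg (range_subset_range.2 hm)
      fun n _ _ => extendByZero_nonneg hnn n
  refine ⟨q, hlow, hhigh, fun j => stepVector ε q r j, fun j => rfl, ?_, ?_⟩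
  · rw [Fin.sum_univ_eq_sum_range (stepVector ε q r), sum_range_stepVector hε.le hq hr (by omega),
      hsum, min_eq_left (by linarith [hbound d])]
  · rw [hp]
    exact sumLargest_le_sumLargest_of_sum_range_le hP hprefix
end

section
/- Let r ≥ 1 be an integer and ε ∈ (0, 1]. For real k > 0 define g_{ε,r}(k) := f(k)·(1 − ε r (k + r) / (k (r + 1))), where f(k) := ((∏_{i=0}^{r−1} (k + i)) / r!) · (ε/k)^r. Then for all reals 0 < a ≤ b and every k ∈ [a, b], one has g_{ε,r}(k) ≥ min(g_{ε,r}(a), g_{ε,r}(b)); that is, the minimum of g_{ε,r} over the interval [a, b] is attained at one of the endpoints. -/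
/-- `g_{ε,r}(k) = C(r+k-1, r)·(ε/k)^r·(1 - εr(k+r)/(k(r+1)))` for real `k > 0`, where
`C(r+k-1, r) = (∏_{i=0}^{r-1}(k+i))/r!` is the generalized binomial coefficient. -/
noncomputable def gReal (r : ℕ) (ε k : ℝ) : ℝ :=
  ((∏ i ∈ Finset.range r, (k + (i : ℝ))) / (Nat.factorial r : ℝ)) * (ε / k) ^ r *
    (1 - ε * (r : ℝ) * (k + (r : ℝ)) / (k * ((r : ℝ) + 1)))

/-!
In the variable `t = 1/k`, `g_{ε,r}(k)` is a positive multiple of `Q(t) L(t)` with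
`Q(t) = ∏_{i<r} (1 + i t)` nonnegative and nondecreasing and `L` affine and nonincreasing.
If `L(t₂) ≤ 0`, then `Q L` at `t₂` is below its value at any `s ≤ t₂`. Otherwise `L ≥ 0` on
`[t₁, t₂]`, so `Q L` is there a product of nonnegative affine functions, hence log-concave by
weighted AM-GM, hence quasiconcave.
-/

open Set

section LogConcave

variable {E : Type*} [AddCommGroup E] [Module ℝ E]

/-- Log-concavity stated multiplicatively, so that zeros of `f` (where `Real.log` is junk) are
allowed. -/
def LogConcaveOn (s : Set E) (f : E → ℝ) : Prop :=
  Convex ℝ s ∧ (∀ x ∈ s, 0 ≤ f x) ∧ ∀ ⦃x⦄, x ∈ s → ∀ ⦃y⦄, y ∈ s → ∀ ⦃a b : ℝ⦄,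
    0 ≤ a → 0 ≤ b → a + b = 1 → f x ^ a * f y ^ b ≤ f (a • x + b • y)

variable {s : Set E} {f g : E → ℝ}

theorem ConcaveOn.logConcaveOn (hf : ConcaveOn ℝ s f) (hf₀ : ∀ x ∈ s, 0 ≤ f x) :
    LogConcaveOn s f :=
  ⟨hf.1, hf₀, fun x hx y hy _ _ ha hb hab =>
    (Real.geom_mean_le_arith_mean2_weighted ha hb (hf₀ x hx) (hf₀ y hy) hab).trans
      (hf.2 hx hy ha hb hab)⟩

theorem LogConcaveOn.mul (hf : LogConcaveOn s f) (hg : LogConcaveOn s g) :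
    LogConcaveOn s (fun x => f x * g x) := by
  refine ⟨hf.1, fun x hx => mul_nonneg (hf.2.1 x hx) (hg.2.1 x hx),
    fun x hx y hy a b ha hb hab => ?_⟩
  have hfx := hf.2.1 x hx
  have hfy := hf.2.1 y hy
  have hgx := hg.2.1 x hx
  have hgy := hg.2.1 y hy
  calc (f x * g x) ^ a * (f y * g y) ^ b = (f x ^ a * f y ^ b) * (g x ^ a * g y ^ b) := by
        rw [Real.mul_rpow hfx hgx, Real.mul_rpow hfy hgy]; ring
    _ ≤ f (a • x + b • y) * g (a • x + b • y) :=
        mul_le_mul (hf.2.2 hx hy ha hb hab) (hg.2.2 hx hy ha hb hab) (by positivity)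
          (hf.2.1 _ (hf.1 hx hy ha hb hab))

theorem LogConcaveOn.prod {ι : Type*} (t : Finset ι) {f : ι → E → ℝ} (hs : Convex ℝ s)
    (hf : ∀ i ∈ t, LogConcaveOn s (f i)) : LogConcaveOn s (fun x => ∏ i ∈ t, f i x) := by
  classical
  induction t using Finset.induction_on with
  | empty =>
    refine ⟨hs, fun _ _ => zero_le_one, fun _ _ _ _ _ _ _ _ _ => ?_⟩
    simp
  | insert i t hi ih =>
    simp_rw [Finset.prod_insert hi]
    exact (hf i (t.mem_insert_self i)).mul (ih fun j hj => hf j (Finset.mem_insert_of_mem hj))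

theorem LogConcaveOn.quasiconcaveOn (hf : LogConcaveOn s f) : QuasiconcaveOn ℝ s f := by
  refine quasiconcaveOn_iff_min_le.2 ⟨hf.1, fun x hx y hy a b ha hb hab => ?_⟩
  have hm₀ : 0 ≤ min (f x) (f y) := le_min (hf.2.1 x hx) (hf.2.1 y hy)
  calc min (f x) (f y) = min (f x) (f y) ^ a * min (f x) (f y) ^ b := by
        rw [← Real.rpow_add' hm₀ (by simp [hab]), hab, Real.rpow_one]
    _ ≤ f x ^ a * f y ^ b :=
        mul_le_mul (Real.rpow_le_rpow hm₀ (min_le_left _ _) ha)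
          (Real.rpow_le_rpow hm₀ (min_le_right _ _) hb) (by positivity)
          (Real.rpow_nonneg (hf.2.1 x hx) a)
    _ ≤ f (a • x + b • y) := hf.2.2 hx hy ha hb hab

end LogConcave

theorem QuasiconcaveOn.min_le_of_mem_Icc {𝕜 β : Type*} [Field 𝕜] [LinearOrder 𝕜]
    [IsStrictOrderedRing 𝕜] [LinearOrder β] {s : Set 𝕜} {f : 𝕜 → β}
    (hf : QuasiconcaveOn 𝕜 s f) {x y z : 𝕜} (hx : x ∈ s) (hy : y ∈ s) (hz : z ∈ Icc x y) :
    min (f x) (f y) ≤ f z :=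
  ((hf (min (f x) (f y))).ordConnected.out ⟨hx, min_le_left _ _⟩ ⟨hy, min_le_right _ _⟩ hz).2

theorem concaveOn_const_add_mul {s : Set ℝ} (hs : Convex ℝ s) (c d : ℝ) :
    ConcaveOn ℝ s (fun t => c + d * t) :=
  ⟨hs, fun _ _ _ _ _ _ _ _ hab => le_of_eq (by simp only [smul_eq_mul]; linear_combination c * hab)⟩

noncomputable def gRecip (r : ℕ) (ε t : ℝ) : ℝ :=
  (∏ i ∈ Finset.range r, (1 + (i : ℝ) * t)) * ((r + 1 - ε * r) + -(ε * r * r) * t)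

theorem gReal_eq_mul_gRecip (r : ℕ) (ε : ℝ) {k : ℝ} (hk : 0 < k) :
    gReal r ε k = ε ^ r / (r.factorial * (r + 1)) * gRecip r ε (1 / k) := by
  have hprod : ∏ i ∈ Finset.range r, (1 + (i : ℝ) * (1 / k)) =
      (∏ i ∈ Finset.range r, (k + (i : ℝ))) * (1 / k) ^ r := by
    rw [← Finset.card_range r, ← Finset.prod_const, Finset.card_range, ← Finset.prod_mul_distrib]
    refine Finset.prod_congr rfl fun i _ => ?_
    field_simp
  unfold gReal gRecip
  rw [hprod]
  field_simp
  ring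

theorem gRecip_min_le_of_mem_Icc (r : ℕ) {ε t₁ t₂ s : ℝ} (hε : 0 ≤ ε) (ht₁ : 0 ≤ t₁)
    (hs : s ∈ Icc t₁ t₂) : min (gRecip r ε t₁) (gRecip r ε t₂) ≤ gRecip r ε s := by
  set Q : ℝ → ℝ := fun t => ∏ i ∈ Finset.range r, (1 + (i : ℝ) * t)
  set L : ℝ → ℝ := fun t => (r + 1 - ε * r) + -(ε * r * r) * t with hL
  have hQ_nonneg : ∀ t, 0 ≤ t → 0 ≤ Q t := fun t ht => Finset.prod_nonneg fun i _ => by positivity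
  have hQ_mono : Q s ≤ Q t₂ := Finset.prod_le_prod (fun i _ => by nlinarith [hs.1])
    fun i _ => by nlinarith [hs.2, (i.cast_nonneg : (0 : ℝ) ≤ i)]
  have hL_anti : ∀ u v, u ≤ v → L v ≤ L u := fun u v huv => by
    simp only [hL]; nlinarith [mul_nonneg (mul_nonneg hε r.cast_nonneg) r.cast_nonneg]
  rcases le_total (L t₂) 0 with hL₂ | hL₂
  · refine (min_le_right _ _).trans ?_
    calc Q t₂ * L t₂ ≤ Q s * L t₂ := mul_le_mul_of_nonpos_right hQ_mono hL₂
      _ ≤ Q s * L s := mul_le_mul_of_nonneg_left (hL_anti _ _ hs.2) (hQ_nonneg s (ht₁.trans hs.1))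
  · have hlog : LogConcaveOn (Icc t₁ t₂) (gRecip r ε) :=
      (LogConcaveOn.prod (Finset.range r) (convex_Icc t₁ t₂) fun i _ =>
        (concaveOn_const_add_mul (convex_Icc t₁ t₂) 1 (i : ℝ)).logConcaveOn
          fun t ht => by have := ht₁.trans ht.1; positivity).mul
      ((concaveOn_const_add_mul (convex_Icc t₁ t₂) _ _).logConcaveOn
          fun t ht => hL₂.trans (hL_anti _ _ ht.2))
    exact hlog.quasiconcaveOn.min_le_of_mem_Icc ⟨le_rfl, hs.1.trans hs.2⟩
      ⟨hs.1.trans hs.2, le_rfl⟩ hs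

theorem stmt11_general (r : ℕ) (ε : ℝ) (hε0 : 0 < ε)
    (a b : ℝ) (ha : 0 < a) (k : ℝ) (hak : a ≤ k) (hkb : k ≤ b) :
    min (gReal r ε a) (gReal r ε b) ≤ gReal r ε k := by
  have hk : 0 < k := ha.trans_le hak
  have hb : 0 < b := hk.trans_le hkb
  rw [gReal_eq_mul_gRecip r ε ha, gReal_eq_mul_gRecip r ε hb, gReal_eq_mul_gRecip r ε hk,
    ← mul_min_of_nonneg _ _ (by positivity), min_comm]
  exact mul_le_mul_of_nonneg_left (gRecip_min_le_of_mem_Icc r hε0.le (by positivity)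
    ⟨one_div_le_one_div_of_le hk hkb, one_div_le_one_div_of_le ha hak⟩) (by positivity)

/-- The minimum of `g_{ε,r}` over any interval `[a, b] ⊆ (0, ∞)` is attained at an endpoint:
for every `k ∈ [a, b]`, `g_{ε,r}(k) ≥ min(g_{ε,r}(a), g_{ε,r}(b))`. -/
theorem stmt11 (r : ℕ) (hr : 1 ≤ r) (ε : ℝ) (hε0 : 0 < ε) (hε1 : ε ≤ 1)
    (a b : ℝ) (ha : 0 < a) (hab : a ≤ b) (k : ℝ) (hak : a ≤ k) (hkb : k ≤ b) :
    min (gReal r ε a) (gReal r ε b) ≤ gReal r ε k :=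
  stmt11_general r ε hε0 a b ha k hak hkb
end

section
/- Fix an integer r ≥ 1 and a real ε ∈ (0, 1]. Then, as the integer d tends to infinity (over d > r), the quantity g_{d−r}(ε, r, ε/(d−r)) converges to ε^r (r + 1 − ε r) / (r + 1)!, where for a nonnegative integer k and real q, g_k(ε, r, q) := C(r+k−1, r+1)·q^{r+1} + C(r+k−1, r)·(1 − (r+k−1)q)·q^{r} + C(r+k−1, r−1)·(1 − ε − (r−1)q)·(ε − qk)·q^{r−1}, with C(·,·) the binomial coefficient. -/
open Filter Topology ProbabilityTheory

/-! Since `q * k = ε` for `k = d - r` and `q = ε / k`, the last summand of `gk` vanishes. With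
`n = d - 1 = r + k - 1` the other two are Poisson-limit terms `C(n, j) q^j` with `n q → ε`, which
tend to `ε^j / j!`; so the limit is `ε^(r+1) / (r+1)! + ε^r / r! * (1 - ε)`. -/

/-- `g_k(ε, r, q) := C(r+k-1, r+1) q^{r+1} + C(r+k-1, r)(1 - (r+k-1)q) q^r
+ C(r+k-1, r-1)(1 - ε - (r-1)q)(ε - qk) q^{r-1}`. -/
noncomputable def gk (r k : ℕ) (ε q : ℝ) : ℝ :=
  (Nat.choose (r + k - 1) (r + 1) : ℝ) * q ^ (r + 1)
    + (Nat.choose (r + k - 1) r : ℝ) * (1 - ((r : ℝ) + (k : ℝ) - 1) * q) * q ^ r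
    + (Nat.choose (r + k - 1) (r - 1) : ℝ) * (1 - ε - ((r : ℝ) - 1) * q) *
        (ε - q * (k : ℝ)) * q ^ (r - 1)

lemma gk_of_mul_eq {r k : ℕ} {ε q : ℝ} (hq : q * k = ε) :
    gk r k ε q = (r + k - 1).choose (r + 1) * q ^ (r + 1)
      + (r + k - 1).choose r * (1 - ((r : ℝ) + k - 1) * q) * q ^ r := by
  simp [gk, hq]

lemma gk_sub_eq_choose_pred {r d : ℕ} (hrd : r < d) (ε : ℝ) :
    gk r (d - r) ε (ε / ((d - r : ℕ) : ℝ)) =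
      (d - 1).choose (r + 1) * (ε / ((d - 1 : ℕ) + 1 - r)) ^ (r + 1)
        + (d - 1).choose r * (ε / ((d - 1 : ℕ) + 1 - r)) ^ r
          * (1 - (d - 1 : ℕ) * (ε / ((d - 1 : ℕ) + 1 - r))) := by
  have hk : ((d - r : ℕ) : ℝ) ≠ 0 := by exact_mod_cast (Nat.sub_pos_of_lt hrd).ne'
  have hcast : ((d - 1 : ℕ) : ℝ) + 1 - r = ((d - r : ℕ) : ℝ) := by
    rw [Nat.cast_sub (by omega : 1 ≤ d), Nat.cast_sub hrd.le]; ring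
  have hidx : r + (d - r) - 1 = d - 1 := by omega
  rw [gk_of_mul_eq (div_mul_cancel₀ ε hk), hidx, hcast,
    ← Nat.cast_add, Nat.add_sub_of_le hrd.le, Nat.cast_sub (by omega : 1 ≤ d)]
  push_cast
  ring

lemma tendsto_natCast_mul_div_add_sub (ε c : ℝ) :
    Tendsto (fun n : ℕ => (n : ℝ) * (ε / (n + 1 - c))) atTop (𝓝 ε) := by
  have h := (tendsto_natCast_div_add_atTop (1 - c)).mul_const ε
  rw [one_mul] at h
  refine h.congr fun n => ?_
  rw [add_sub_assoc]
  ring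

theorem stmt13_general (r : ℕ) (ε : ℝ) :
    Filter.Tendsto (fun d : ℕ => gk r (d - r) ε (ε / ((d - r : ℕ) : ℝ)))
      Filter.atTop
      (nhds (ε ^ r * ((r : ℝ) + 1 - ε * (r : ℝ)) / (Nat.factorial (r + 1) : ℝ))) := by
  have hnq := tendsto_natCast_mul_div_add_sub ε r
  have hlim := (tendsto_choose_mul_pow_atTop (r + 1) hnq).add
    ((tendsto_choose_mul_pow_atTop r hnq).mul ((tendsto_const_nhds (x := (1 : ℝ))).sub hnq))
  have hvalue : ε ^ (r + 1) / ((r + 1).factorial : ℝ) + ε ^ r / (r.factorial : ℝ) * (1 - ε)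
      = ε ^ r * ((r : ℝ) + 1 - ε * r) / ((r + 1).factorial : ℝ) := by
    rw [Nat.factorial_succ]
    push_cast
    field_simp
    ring
  rw [← hvalue]
  refine (hlim.comp (tendsto_sub_atTop_nat 1)).congr' ?_
  filter_upwards [eventually_gt_atTop r] with d hrd
  exact (gk_sub_eq_choose_pred hrd ε).symm

/-- Large-dimension limit of the third endpoint value: as `d → ∞`,
`g_{d-r}(ε, r, ε/(d-r)) → ε^r (r + 1 - ε r) / (r + 1)!`. -/
theorem stmt13 (r : ℕ) (hr : 1 ≤ r) (ε : ℝ) (hε0 : 0 < ε) (hε1 : ε ≤ 1) :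
    Filter.Tendsto (fun d : ℕ => gk r (d - r) ε (ε / ((d - r : ℕ) : ℝ)))
      Filter.atTop
      (nhds (ε ^ r * ((r : ℝ) + 1 - ε * (r : ℝ)) / (Nat.factorial (r + 1) : ℝ))) :=
  stmt13_general r ε
end

section
/- For all positive integers r and k and every real ε ∈ (0, 1], the following inequality holds: C(r+k−1, r+1)·ε·(r+1) + C(r+k−1, r)·(k r − ε (r+1)(r+k−1)) + C(r+k−1, r−1)·k·(ε (r+k−1) − k) ≤ 0, where C(·,·) denotes the binomial coefficient (with C(n, m) = 0 when m > n). -/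
/-!
Writing `n = r + k - 1`, the absorption identity `C(n, j+1)(j+1) + C(n, j) j = n C(n, j)`
at `j = r` and `j = r - 1` gives `C(n, r+1)(r+1) = (k-1) C(n, r)` and `r C(n, r) = k C(n, r-1)`,
and these collapse the left-hand side to `-ε r C(n, r)`.
-/

/-- Truncation-free form of `Nat.choose_succ_right_eq`. -/
theorem Nat.choose_succ_mul_add_choose_mul (n j : ℕ) :
    n.choose (j + 1) * (j + 1) + n.choose j * j = n * n.choose j := by
  rw [Nat.choose_succ_right_eq]
  rcases le_or_gt j n with hjn | hnj
  · rw [← mul_add, Nat.sub_add_cancel hjn, mul_comm]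
  · simp [Nat.choose_eq_zero_of_lt hnj]

theorem choose_combination_eq_neg_mul_choose (s k : ℕ) (ε : ℝ) :
    (Nat.choose (s + k) (s + 2) : ℝ) * ε * ((s + 1 : ℕ) + 1)
      + (Nat.choose (s + k) (s + 1) : ℝ) *
          ((k : ℝ) * (s + 1 : ℕ) - ε * ((s + 1 : ℕ) + 1) * ((s + 1 : ℕ) + (k : ℝ) - 1))
      + (Nat.choose (s + k) s : ℝ) * (k : ℝ) *
          (ε * ((s + 1 : ℕ) + (k : ℝ) - 1) - (k : ℝ))
      = -ε * (s + 1 : ℕ) * (Nat.choose (s + k) (s + 1) : ℝ) := by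
  have top : ((s + k).choose (s + 2) * (s + 2) + (s + k).choose (s + 1) * (s + 1) : ℝ)
      = (s + k) * (s + k).choose (s + 1) := by
    exact_mod_cast Nat.choose_succ_mul_add_choose_mul (s + k) (s + 1)
  have bottom : ((s + k).choose (s + 1) * (s + 1) + (s + k).choose s * s : ℝ)
      = (s + k) * (s + k).choose s := by
    exact_mod_cast Nat.choose_succ_mul_add_choose_mul (s + k) s
  push_cast
  linear_combination ε * top + ((k : ℝ) - ε * (s + k)) * bottom

theorem stmt15_general (r k : ℕ) (hr : 0 < r) (ε : ℝ) (hε0 : 0 < ε) :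
    (Nat.choose (r + k - 1) (r + 1) : ℝ) * ε * ((r : ℝ) + 1)
      + (Nat.choose (r + k - 1) r : ℝ) *
          ((k : ℝ) * (r : ℝ) - ε * ((r : ℝ) + 1) * ((r : ℝ) + (k : ℝ) - 1))
      + (Nat.choose (r + k - 1) (r - 1) : ℝ) * (k : ℝ) *
          (ε * ((r : ℝ) + (k : ℝ) - 1) - (k : ℝ)) ≤ 0 := by
  obtain ⟨s, rfl⟩ : ∃ s, r = s + 1 := Nat.exists_eq_succ_of_ne_zero hr.ne'
  have hn : s + 1 + k - 1 = s + k := by omega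
  rw [hn, Nat.add_sub_cancel, choose_combination_eq_neg_mul_choose s k ε]
  have : 0 ≤ ε * (s + 1 : ℕ) * (Nat.choose (s + k) (s + 1) : ℝ) := by positivity
  linarith

/-- Nonpositivity of `∂g_k/∂q` at the endpoint `q = ε/k` (after clearing positive factors):
for all positive integers `r`, `k` and `ε ∈ (0, 1]`,
`C(r+k-1, r+1)·ε·(r+1) + C(r+k-1, r)·(kr - ε(r+1)(r+k-1)) + C(r+k-1, r-1)·k·(ε(r+k-1) - k) ≤ 0`. -/
theorem stmt15 (r k : ℕ) (hr : 0 < r) (hk : 0 < k) (ε : ℝ) (hε0 : 0 < ε) (hε1 : ε ≤ 1) :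
    (Nat.choose (r + k - 1) (r + 1) : ℝ) * ε * ((r : ℝ) + 1)
      + (Nat.choose (r + k - 1) r : ℝ) *
          ((k : ℝ) * (r : ℝ) - ε * ((r : ℝ) + 1) * ((r : ℝ) + (k : ℝ) - 1))
      + (Nat.choose (r + k - 1) (r - 1) : ℝ) * (k : ℝ) *
          (ε * ((r : ℝ) + (k : ℝ) - 1) - (k : ℝ)) ≤ 0 :=
  stmt15_general r k hr ε hε0
end

section
/- Let ε be a real with 0 < ε ≤ 1/√2, let k be a positive integer, and let ε₁, …, ε_k ∈ [0, 1] satisfy ∏_{i=1}^k (1 − ε_i²) = 1 − ε²/4. Then ε²/4 ≤ Σ_{i=1}^k ε_i² ≤ 2ε²/7. -/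
/-!
Writing `t = ε²/4 ≤ 1/8`, the lower bound is the Weierstrass product inequality
`∏ (1 - xᵢ) ≥ 1 - ∑ xᵢ`. For the upper bound, `x ≤ -log (1 - x)` turns the product into
`∑ εᵢ² ≤ -log (1 - t) ≤ t / (1 - t)`, and `t / (1 - t) ≤ 8t/7` because `t ≤ 1/8`.
-/

open Finset Real

theorem Finset.one_sub_sum_le_prod_one_sub {ι R : Type*} [CommRing R] [LinearOrder R]
    [IsStrictOrderedRing R] (s : Finset ι) (f : ι → R) (h0 : ∀ i ∈ s, 0 ≤ f i)
    (h1 : ∀ i ∈ s, f i ≤ 1) : 1 - ∑ i ∈ s, f i ≤ ∏ i ∈ s, (1 - f i) := by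
  classical
  induction s using Finset.induction_on with
  | empty => simp
  | insert a s ha ih =>
    rw [sum_insert ha, prod_insert ha]
    have ih := ih (fun i hi ↦ h0 i (mem_insert_of_mem hi)) (fun i hi ↦ h1 i (mem_insert_of_mem hi))
    have ha0 := h0 a (mem_insert_self a s)
    have ha1 := h1 a (mem_insert_self a s)
    have hsum : 0 ≤ ∑ i ∈ s, f i := sum_nonneg fun i hi ↦ h0 i (mem_insert_of_mem hi)
    nlinarith [mul_le_mul_of_nonneg_left ih (sub_nonneg.mpr ha1), mul_nonneg ha0 hsum]

theorem Finset.sum_le_neg_log_prod_one_sub {ι : Type*} (s : Finset ι) (f : ι → ℝ)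
    (hf : ∀ i ∈ s, f i < 1) : ∑ i ∈ s, f i ≤ -log (∏ i ∈ s, (1 - f i)) := by
  rw [log_prod fun i hi ↦ (sub_pos.mpr (hf i hi)).ne', ← sum_neg_distrib]
  refine sum_le_sum fun i hi ↦ ?_
  linarith [log_le_sub_one_of_pos (sub_pos.mpr (hf i hi))]

theorem Real.neg_log_one_sub_le_div {t : ℝ} (ht : t < 1) : -log (1 - t) ≤ t / (1 - t) := by
  have hpos : 0 < 1 - t := sub_pos.mpr ht
  calc -log (1 - t) = log (1 - t)⁻¹ := (log_inv _).symm
    _ ≤ (1 - t)⁻¹ - 1 := log_le_sub_one_of_pos (inv_pos.mpr hpos)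
    _ = t / (1 - t) := by field_simp; ring

theorem stmt17_general (ε : ℝ) (hε0 : 0 < ε) (hε1 : ε ≤ 1 / Real.sqrt 2) (k : ℕ)
    (e : Fin k → ℝ) (he0 : ∀ i, 0 ≤ e i) (he1 : ∀ i, e i ≤ 1)
    (hprod : ∏ i, (1 - e i ^ 2) = 1 - ε ^ 2 / 4) :
    ε ^ 2 / 4 ≤ ∑ i, e i ^ 2 ∧ ∑ i, e i ^ 2 ≤ 2 * ε ^ 2 / 7 := by
  have hε2 : ε ^ 2 ≤ 1 / 2 := by
    have h := pow_le_pow_left₀ hε0.le hε1 2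
    rwa [div_pow, one_pow, sq_sqrt zero_le_two] at h
  have hsq1 : ∀ i, e i ^ 2 ≤ 1 := fun i ↦ pow_le_one₀ (he0 i) (he1 i)
  have hsq_lt : ∀ i, e i ^ 2 < 1 := by
    refine fun i ↦ (hsq1 i).lt_of_ne fun h ↦ ?_
    have := prod_eq_zero (f := fun j ↦ 1 - e j ^ 2) (mem_univ i) (sub_eq_zero.mpr h.symm)
    linarith
  constructor
  · linarith [one_sub_sum_le_prod_one_sub univ (fun i ↦ e i ^ 2)
      (fun i _ ↦ sq_nonneg (e i)) (fun i _ ↦ hsq1 i)]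
  · calc ∑ i, e i ^ 2 ≤ -log (1 - ε ^ 2 / 4) := by
          simpa [hprod] using sum_le_neg_log_prod_one_sub univ _ fun i _ ↦ hsq_lt i
      _ ≤ ε ^ 2 / 4 / (1 - ε ^ 2 / 4) := neg_log_one_sub_le_div (by linarith)
      _ ≤ 2 * ε ^ 2 / 7 := by
          rw [div_le_iff₀ (by linarith)]
          nlinarith [sq_nonneg ε]

/-- Two-sided bound on `Σ εᵢ²`: if `0 < ε ≤ 1/√2`, each `εᵢ ∈ [0, 1]`, and
`∏ᵢ (1 - εᵢ²) = 1 - ε²/4`, then `ε²/4 ≤ Σᵢ εᵢ² ≤ 2ε²/7`. -/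
theorem stmt17 (ε : ℝ) (hε0 : 0 < ε) (hε1 : ε ≤ 1 / Real.sqrt 2) (k : ℕ) (hk : 0 < k)
    (e : Fin k → ℝ) (he0 : ∀ i, 0 ≤ e i) (he1 : ∀ i, e i ≤ 1)
    (hprod : ∏ i, (1 - e i ^ 2) = 1 - ε ^ 2 / 4) :
    ε ^ 2 / 4 ≤ ∑ i, e i ^ 2 ∧ ∑ i, e i ^ 2 ≤ 2 * ε ^ 2 / 7 :=
  stmt17_general ε hε0 hε1 k e he0 he1 hprod
end
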